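/- arXiv:2303.05058 — 11 statements merged into one kernel-verified Lean document; each statement's English description precedes it below -/
import Mathlib

section
/- Let (a,b,c) be a primitive triple of positive integers with a² + b² = 2c². Then there exist coprime integers α, β of different parities such that a = |α² - 2αβ - β²|, b = |α² + 2αβ - β²|, and c = α² + β². -/
/-!
Since a² + b² = 2c², the numbers u = (a + b)/2 and v = (a - b)/2 satisfy u² + v² = c², and
primitivity of (a, b, c) makes a, b odd and coprime, hence u, v coprime. Euclid's parametrisation
of the primitive Pythagorean triple (u, v, c) by coprime m, n of different parities then gives
a = u + v and b = u - v as the stated quadratic forms in (α, β) = (n, m).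
-/

theorem Nat.Prime.dvd_of_mul_self_dvd_two_mul_sq {p c : ℕ} (hp : p.Prime) (h : p * p ∣ 2 * c ^ 2) :
    p ∣ c := by
  rcases (Nat.Prime.dvd_mul hp).1 (dvd_of_mul_left_dvd h) with h2 | hc
  · obtain rfl := (Nat.prime_dvd_prime_iff_eq hp Nat.prime_two).1 h2
    exact Nat.prime_two.dvd_of_dvd_pow (Nat.dvd_of_mul_dvd_mul_left two_pos h)
  · exact hp.dvd_of_dvd_pow hc

theorem Nat.coprime_of_sq_add_sq_eq_two_mul_sq {a b c : ℕ} (h : a ^ 2 + b ^ 2 = 2 * c ^ 2)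
    (hprim : Nat.gcd a (Nat.gcd b c) = 1) : Nat.Coprime a b := by
  refine Nat.coprime_of_dvd fun p hp hpa hpb => ?_
  have hpc : p ∣ c := hp.dvd_of_mul_self_dvd_two_mul_sq <| h ▸
    dvd_add (by simpa [sq] using mul_dvd_mul hpa hpa) (by simpa [sq] using mul_dvd_mul hpb hpb)
  exact hp.not_dvd_one (hprim ▸ Nat.dvd_gcd hpa (Nat.dvd_gcd hpb hpc))

theorem Int.odd_of_isCoprime_of_sq_add_sq_eq_two_mul_sq {a b c : ℤ} (hab : IsCoprime a b)
    (h : a ^ 2 + b ^ 2 = 2 * c ^ 2) : Odd a ∧ Odd b := by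
  have hsame : Even a ↔ Even b := by
    have : Even (a ^ 2 + b ^ 2) := ⟨c ^ 2, by rw [h]; ring⟩
    simpa [Int.even_add, Int.even_pow] using this
  have ha : ¬Even a := fun hea => by
    have := hab.isUnit_of_dvd' (even_iff_two_dvd.1 hea) (even_iff_two_dvd.1 (hsame.1 hea))
    norm_num [Int.isUnit_iff] at this
  exact ⟨Int.not_even_iff_odd.1 ha, Int.not_even_iff_odd.1 (hsame.not.1 ha)⟩

theorem Int.exists_of_sq_add_sq_eq_two_mul_sq {a b c : ℤ} (hab : IsCoprime a b) (hc : 0 ≤ c)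
    (h : a ^ 2 + b ^ 2 = 2 * c ^ 2) :
    ∃ α β : ℤ, IsCoprime α β ∧ α % 2 ≠ β % 2 ∧
      |a| = |α ^ 2 - 2 * α * β - β ^ 2| ∧ |b| = |α ^ 2 + 2 * α * β - β ^ 2| ∧
      c = α ^ 2 + β ^ 2 := by
  obtain ⟨ha, hb⟩ := Int.odd_of_isCoprime_of_sq_add_sq_eq_two_mul_sq hab h
  obtain ⟨u, hu⟩ := ha.add_odd hb
  obtain ⟨v, hv⟩ := ha.sub_odd hb
  obtain rfl : a = u + v := by linarith
  obtain rfl : b = u - v := by linarith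
  have huv : IsCoprime u v := by
    obtain ⟨x, y, hxy⟩ := hab
    exact ⟨x + y, x - y, by linear_combination hxy⟩
  have htriple : PythagoreanTriple u v c := by
    unfold PythagoreanTriple
    linarith
  obtain ⟨m, n, huv_eq, hc_eq, hmn, hpar⟩ :=
    PythagoreanTriple.coprime_classification.mp ⟨htriple, Int.isCoprime_iff_gcd_eq_one.mp huv⟩
  have hc_eq' : c = m ^ 2 + n ^ 2 := by
    rcases hc_eq with hc_eq | hc_eq
    · exact hc_eq
    · nlinarith [sq_nonneg m, sq_nonneg n]
  refine ⟨n, m, (Int.isCoprime_iff_gcd_eq_one.mpr hmn).symm, by omega, ?_, ?_, by rw [hc_eq']; ring⟩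
  · rcases huv_eq with ⟨rfl, rfl⟩ | ⟨rfl, rfl⟩ <;> exact abs_eq_abs.2 (Or.inr (by ring))
  · rcases huv_eq with ⟨rfl, rfl⟩ | ⟨rfl, rfl⟩
    · exact abs_eq_abs.2 (Or.inr (by ring))
    · exact abs_eq_abs.2 (Or.inl (by ring))

theorem stmt0_general (a b c : ℕ)
    (hprim : Nat.gcd a (Nat.gcd b c) = 1) (h : a ^ 2 + b ^ 2 = 2 * c ^ 2) :
    ∃ α β : ℤ, IsCoprime α β ∧ α % 2 ≠ β % 2 ∧
      (a : ℤ) = |α ^ 2 - 2 * α * β - β ^ 2| ∧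
      (b : ℤ) = |α ^ 2 + 2 * α * β - β ^ 2| ∧
      (c : ℤ) = α ^ 2 + β ^ 2 := by
  have hab : IsCoprime (a : ℤ) b :=
    Nat.isCoprime_iff_coprime.mpr (Nat.coprime_of_sq_add_sq_eq_two_mul_sq h hprim)
  obtain ⟨α, β, hαβ, hpar, ha, hb, hc⟩ :=
    Int.exists_of_sq_add_sq_eq_two_mul_sq hab (Int.natCast_nonneg c) (by exact_mod_cast h)
  exact ⟨α, β, hαβ, hpar, by simpa using ha, by simpa using hb, hc⟩

/-- Every primitive triple (a,b,c) of positive integers with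
a² + b² = 2c² arises from coprime integers α, β of different parities via
a = |α² - 2αβ - β²|, b = |α² + 2αβ - β²|, c = α² + β². -/
theorem stmt0 (a b c : ℕ) (ha : 0 < a) (hb : 0 < b) (hc : 0 < c)
    (hprim : Nat.gcd a (Nat.gcd b c) = 1) (h : a ^ 2 + b ^ 2 = 2 * c ^ 2) :
    ∃ α β : ℤ, IsCoprime α β ∧ α % 2 ≠ β % 2 ∧
      (a : ℤ) = |α ^ 2 - 2 * α * β - β ^ 2| ∧
      (b : ℤ) = |α ^ 2 + 2 * α * β - β ^ 2| ∧
      (c : ℤ) = α ^ 2 + β ^ 2 :=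
  stmt0_general a b c hprim h
end

section
/- Let a, b be coprime odd positive integers with a² + b² = 2c² for some integer c, and let n be a positive square-free integer. Then there are no coprime nonzero integers u, v with u/v ∉ {-2, -1/2, -1, 1, 0} and d ∈ ℤ such that d²u³(u+2v) = -a²n and d²v³(v+2u) = b²n. (Consequently the elliptic curve y² = x(x - a²n)(x + b²n) has no rational point of order 3.) -/
/-!
Only 2-adic information is needed. If `u` were even, `d²u³(u + 2v)` would be divisible by `16`,
forcing `4 ∣ a²n`, which is impossible for `a` odd and `n` square-free; so `u` and, symmetrically,
`v` are odd. Adding the two equations and using `a² + b² = 2c²` gives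
`d²(v - u)(u + v)³ = 2c²n`, whose left side is divisible by `8` since `u + v` is even.
Hence `4 ∣ c²n`, again impossible because `c` is odd (odd squares are `1` mod `4`).
-/

namespace Int

theorem not_four_dvd_sq_mul_of_odd {m n : ℤ} (hm : Odd m) (hn : Squarefree n) :
    ¬ 4 ∣ m ^ 2 * n := by
  intro h
  have h2m : IsCoprime 2 m :=
    (Prime.coprime_iff_not_dvd prime_two).mpr (by rwa [← even_iff_two_dvd, not_even_iff_odd])
  have hcop : IsCoprime (2 * 2) (m ^ 2) := (h2m.mul_left h2m).pow_right
  have h4 : 2 * 2 ∣ n := hcop.dvd_of_dvd_mul_left h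
  exact absurd (hn 2 h4) (by norm_num [isUnit_iff])

theorem odd_of_sq_mul_cube_mul_dvd_sq_mul {d m n u v : ℤ} (hm : Odd m) (hn : Squarefree n)
    (h : d ^ 2 * u ^ 3 * (u + 2 * v) ∣ m ^ 2 * n) : Odd u := by
  rw [← not_even_iff_odd]
  rintro ⟨s, rfl⟩
  exact not_four_dvd_sq_mul_of_odd hm hn <|
    dvd_trans ⟨4 * d ^ 2 * s ^ 3 * (s + v), by ring⟩ h

theorem odd_of_sq_add_sq_eq_two_mul_sq {a b c : ℤ} (ha : Odd a) (hb : Odd b)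
    (h : a ^ 2 + b ^ 2 = 2 * c ^ 2) : Odd c := by
  rw [← not_even_iff_odd]
  rintro ⟨k, rfl⟩
  have h8 : a ^ 2 + b ^ 2 = 8 * k ^ 2 := by linear_combination h
  have := sq_mod_four_eq_one_of_odd ha
  have := sq_mod_four_eq_one_of_odd hb
  omega

end Int

theorem stmt2_general (a b : ℕ) (c : ℤ)
    (haodd : Odd a) (hbodd : Odd b)
    (h : (a : ℤ) ^ 2 + (b : ℤ) ^ 2 = 2 * c ^ 2)
    (n : ℕ) (hsf : Squarefree n) :
    ¬ ∃ (d u v : ℤ), u ≠ 0 ∧ v ≠ 0 ∧ IsCoprime u v ∧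
      u ≠ -2 * v ∧ 2 * u ≠ -v ∧ u ≠ -v ∧ u ≠ v ∧
      d ^ 2 * u ^ 3 * (u + 2 * v) = -(a : ℤ) ^ 2 * n ∧
      d ^ 2 * v ^ 3 * (v + 2 * u) = (b : ℤ) ^ 2 * n := by
  rintro ⟨d, u, v, -, -, -, -, -, -, -, h1, h2⟩
  have ha : Odd (a : ℤ) := haodd.natCast
  have hb : Odd (b : ℤ) := hbodd.natCast
  have hn : Squarefree (n : ℤ) := Int.squarefree_natCast.mpr hsf
  have hu : Odd u := Int.odd_of_sq_mul_cube_mul_dvd_sq_mul ha hn ⟨-1, by rw [h1]; ring⟩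
  have hv : Odd v := Int.odd_of_sq_mul_cube_mul_dvd_sq_mul hb hn ⟨1, by rw [h2, mul_one]⟩
  have hc : Odd c := Int.odd_of_sq_add_sq_eq_two_mul_sq ha hb h
  have key : d ^ 2 * ((v - u) * (u + v) ^ 3) = 2 * (c ^ 2 * n) := by
    linear_combination h2 - h1 + (n : ℤ) * h
  obtain ⟨t, ht⟩ := hu.add_odd hv
  refine Int.not_four_dvd_sq_mul_of_odd hc hn <| (mul_dvd_mul_iff_left two_ne_zero).mp ?_
  exact ⟨d ^ 2 * (v - u) * t ^ 3, by rw [← key, ht]; ring⟩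

/-- no point of order 3 (Ono's criterion data cannot exist). -/
theorem stmt2 (a b : ℕ) (c : ℤ) (ha : 0 < a) (hb : 0 < b)
    (haodd : Odd a) (hbodd : Odd b) (hab : Nat.gcd a b = 1)
    (h : (a : ℤ) ^ 2 + (b : ℤ) ^ 2 = 2 * c ^ 2)
    (n : ℕ) (hn : 0 < n) (hsf : Squarefree n) :
    ¬ ∃ (d u v : ℤ), u ≠ 0 ∧ v ≠ 0 ∧ IsCoprime u v ∧
      u ≠ -2 * v ∧ 2 * u ≠ -v ∧ u ≠ -v ∧ u ≠ v ∧
      d ^ 2 * u ^ 3 * (u + 2 * v) = -(a : ℤ) ^ 2 * n ∧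
      d ^ 2 * v ^ 3 * (v + 2 * u) = (b : ℤ) ^ 2 * n :=
  stmt2_general a b c haodd hbodd h n hsf
end

section
/- Let a, b, c, n be positive integers with a² + b² = 2c², gcd(n, 2abc) = 1, n square-free, and let d₁, d₂, d₃ be square-free integers with d₁d₂d₃ a perfect square. If the system of equations -b²n t² + d₂u₂² - d₃u₃² = 0, -a²n t² + d₃u₃² - d₁u₁² = 0, 2c²n t² + d₁u₁² - d₂u₂² = 0 has a nonzero solution in ℚ₂⁴, then d₁ and d₂ have the same parity (both even or both odd). -/
/-!
Dividing `a`, `b`, `c` by `gcd(a, c)` (and multiplying `t` by it) makes `a` and `b` odd, and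
rescaling a nonzero 2-adic solution gives a solution in `ℤ_[2]` with a coordinate equal to 1.
If `d₁` and `d₂` had different parities, then `d₃` would be even, as `d₁ d₂ d₃` is a square and
the `dᵢ` are squarefree. Then two of the equations, read modulo 2 and then modulo 4, force all
four coordinates to be even: a contradiction.
-/

theorem Nat.even_iff_even_of_sq_add_sq_eq_two_mul_sq {a b c : ℕ} (h : a ^ 2 + b ^ 2 = 2 * c ^ 2) :
    Even a ↔ Even c := by
  rw [Nat.even_iff, Nat.even_iff]
  rcases Nat.even_or_odd' a with ⟨x, rfl | rfl⟩ <;>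
    rcases Nat.even_or_odd' b with ⟨y, rfl | rfl⟩ <;>
    rcases Nat.even_or_odd' c with ⟨z, rfl | rfl⟩ <;>
    ring_nf at h <;> omega -- the squares `x ^ 2`, `y ^ 2`, `z ^ 2` enter only as atoms times 4

theorem Nat.exists_odd_of_sq_add_sq_eq_two_mul_sq {a b c : ℕ} (h : a ^ 2 + b ^ 2 = 2 * c ^ 2)
    (ha : 0 < a) :
    ∃ g a₀ b₀ c₀, 0 < g ∧ a = a₀ * g ∧ b = b₀ * g ∧ c = c₀ * g ∧ Odd a₀ ∧ Odd b₀ := by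
  obtain ⟨g, a₀, c₀, hg, hco, rfl, rfl⟩ := Nat.exists_coprime' (Nat.gcd_pos_of_pos_left c ha)
  have hgb : g ∣ b := by
    rw [← Nat.pow_dvd_pow_iff two_ne_zero]
    exact (Nat.dvd_add_right (pow_dvd_pow_of_dvd (dvd_mul_left g a₀) 2)).mp
      ⟨2 * c₀ ^ 2, by rw [h]; ring⟩
  obtain ⟨b₀, rfl⟩ := hgb
  have h₀ : a₀ ^ 2 + b₀ ^ 2 = 2 * c₀ ^ 2 :=
    mul_right_cancel₀ (pow_ne_zero 2 hg.ne') (by linear_combination h)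
  have hc₀ : Odd c₀ := by
    rw [← Nat.not_even_iff_odd]
    intro hc₀
    exact Nat.not_coprime_of_dvd_of_dvd one_lt_two
      ((Nat.even_iff_even_of_sq_add_sq_eq_two_mul_sq h₀).mpr hc₀).two_dvd hc₀.two_dvd hco
  have hodd {x y : ℕ} (hxy : x ^ 2 + y ^ 2 = 2 * c₀ ^ 2) : Odd x := by
    rw [← Nat.not_even_iff_odd, Nat.even_iff_even_of_sq_add_sq_eq_two_mul_sq hxy,
      Nat.not_even_iff_odd]
    exact hc₀
  exact ⟨g, a₀, b₀, c₀, hg, rfl, mul_comm g b₀, rfl, hodd h₀, hodd ((add_comm _ _).trans h₀)⟩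

theorem Int.exists_eq_two_mul_odd_of_squarefree {x : ℤ} (hx : Even x) (hsf : Squarefree x) :
    ∃ e, x = 2 * e ∧ Odd e := by
  obtain ⟨e, rfl⟩ := hx
  refine ⟨e, two_mul e |>.symm, Int.not_even_iff_odd.mp ?_⟩
  rintro ⟨k, rfl⟩
  exact absurd (hsf 2 ⟨k, by ring⟩) (by decide)

theorem Int.two_mul_ne_sq_of_odd {k : ℤ} (hk : Odd k) (m : ℤ) : 2 * k ≠ m ^ 2 := by
  intro h
  obtain ⟨j, rfl⟩ := (Int.even_pow.mp (h ▸ even_two_mul k)).1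
  exact Int.not_even_iff_odd.mpr hk ⟨j ^ 2, by linarith⟩

theorem Int.even_of_squarefree_of_mul_mul_eq_sq {x y z : ℤ} (hx : Even x) (hsf : Squarefree x)
    (hy : Odd y) (h : ∃ m, x * y * z = m ^ 2) : Even z := by
  rw [← Int.not_odd_iff_even]
  intro hz
  obtain ⟨e, rfl, he⟩ := Int.exists_eq_two_mul_odd_of_squarefree hx hsf
  obtain ⟨m, hm⟩ := h
  exact Int.two_mul_ne_sq_of_odd ((he.mul hy).mul hz) m (by rw [← hm]; ring)

theorem Prime.dvd_of_dvd_mul_sq {M : Type*} [CommMonoidWithZero M] {p x y : M} (hp : Prime p)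
    (hx : ¬ p ∣ x) (h : p ∣ x * y ^ 2) : p ∣ y :=
  hp.dvd_of_dvd_pow ((hp.dvd_or_dvd h).resolve_left hx)

section TwoPrime

variable {R : Type*} [CommRing R] [IsDomain R]

omit [IsDomain R] in
theorem Prime.two_not_dvd_intCast_of_odd (hp : Prime (2 : R)) {k : ℤ} (hk : Odd k) :
    ¬ (2 : R) ∣ k := by
  obtain ⟨j, rfl⟩ := hk
  push_cast
  intro h
  exact hp.not_isUnit (isUnit_of_dvd_one ((dvd_add_right (dvd_mul_right 2 (j : R))).mp h))

theorem Prime.two_dvd_of_diagonal_quadrics (hp : Prime (2 : R)) {α e₁ d₂ e₃ γ T U₁ U₂ U₃ : R}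
    (hα : ¬ 2 ∣ α) (he₁ : ¬ 2 ∣ e₁) (hd₂ : ¬ 2 ∣ d₂) (he₃ : ¬ 2 ∣ e₃)
    (E : α * T ^ 2 + 2 * e₁ * U₁ ^ 2 = 2 * e₃ * U₃ ^ 2)
    (F : 2 * γ * T ^ 2 + 2 * e₁ * U₁ ^ 2 = d₂ * U₂ ^ 2) :
    2 ∣ T ∧ 2 ∣ U₁ ∧ 2 ∣ U₂ ∧ 2 ∣ U₃ := by
  obtain ⟨T', rfl⟩ := hp.dvd_of_dvd_mul_sq (y := T) hα
    ⟨e₃ * U₃ ^ 2 - e₁ * U₁ ^ 2, by linear_combination E⟩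
  obtain ⟨V₂, rfl⟩ := hp.dvd_of_dvd_mul_sq (y := U₂) hd₂
    ⟨γ * (2 * T') ^ 2 + e₁ * U₁ ^ 2, by linear_combination -F⟩
  obtain ⟨V₁, rfl⟩ := hp.dvd_of_dvd_mul_sq (y := U₁) he₁
    ⟨d₂ * V₂ ^ 2 - 2 * γ * T' ^ 2, mul_left_cancel₀ hp.ne_zero (by linear_combination F)⟩
  have hU₃ := hp.dvd_of_dvd_mul_sq (y := U₃) he₃
    ⟨α * T' ^ 2 + 2 * e₁ * V₁ ^ 2, mul_left_cancel₀ hp.ne_zero (by linear_combination -E)⟩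
  exact ⟨dvd_mul_right _ _, dvd_mul_right _ _, dvd_mul_right _ _, hU₃⟩

theorem Prime.two_dvd_of_parity_ne (hp : Prime (2 : R)) {α β γ d₁ d₂ d₃ : ℤ} (hα : Odd α)
    (hβ : Odd β) (h₁ : Squarefree d₁) (h₂ : Squarefree d₂) (h₃ : Squarefree d₃)
    (hsq : ∃ m, d₁ * d₂ * d₃ = m ^ 2) (hpar : d₁ % 2 ≠ d₂ % 2) {T U₁ U₂ U₃ : R}
    (E₁ : -(β : R) * T ^ 2 + d₂ * U₂ ^ 2 - d₃ * U₃ ^ 2 = 0)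
    (E₂ : -(α : R) * T ^ 2 + d₃ * U₃ ^ 2 - d₁ * U₁ ^ 2 = 0)
    (E₃ : 2 * (γ : R) * T ^ 2 + d₁ * U₁ ^ 2 - d₂ * U₂ ^ 2 = 0) :
    2 ∣ T ∧ 2 ∣ U₁ ∧ 2 ∣ U₂ ∧ 2 ∣ U₃ := by
  rcases Int.even_or_odd d₁ with hd₁ | hd₁ <;> rcases Int.even_or_odd d₂ with hd₂ | hd₂
  · exact absurd (by rw [Int.even_iff.mp hd₁, Int.even_iff.mp hd₂]) hpar
  · have hd₃ := Int.even_of_squarefree_of_mul_mul_eq_sq hd₁ h₁ hd₂ hsq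
    obtain ⟨e₁, rfl, he₁⟩ := Int.exists_eq_two_mul_odd_of_squarefree hd₁ h₁
    obtain ⟨e₃, rfl, he₃⟩ := Int.exists_eq_two_mul_odd_of_squarefree hd₃ h₃
    push_cast at E₂ E₃
    exact hp.two_dvd_of_diagonal_quadrics (γ := γ) (T := T) (U₁ := U₁) (U₂ := U₂) (U₃ := U₃)
      (hp.two_not_dvd_intCast_of_odd hα) (hp.two_not_dvd_intCast_of_odd he₁)
      (hp.two_not_dvd_intCast_of_odd hd₂)
      (hp.two_not_dvd_intCast_of_odd he₃) (by linear_combination -E₂) (by linear_combination E₃)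
  · have hd₃ := Int.even_of_squarefree_of_mul_mul_eq_sq hd₂ h₂ hd₁
      (by simpa only [mul_comm d₁ d₂] using hsq)
    obtain ⟨e₂, rfl, he₂⟩ := Int.exists_eq_two_mul_odd_of_squarefree hd₂ h₂
    obtain ⟨e₃, rfl, he₃⟩ := Int.exists_eq_two_mul_odd_of_squarefree hd₃ h₃
    push_cast at E₁ E₃
    obtain ⟨hT, hU₂, hU₁, hU₃⟩ := hp.two_dvd_of_diagonal_quadrics
      (γ := -γ) (T := T) (U₁ := U₂) (U₂ := U₁) (U₃ := U₃)
      (dvd_neg.not.mpr (hp.two_not_dvd_intCast_of_odd hβ)) (hp.two_not_dvd_intCast_of_odd he₂)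
      (hp.two_not_dvd_intCast_of_odd hd₁) (hp.two_not_dvd_intCast_of_odd he₃)
      (by linear_combination E₁) (by linear_combination -E₃)
    exact ⟨hT, hU₁, hU₂, hU₃⟩
  · exact absurd (by rw [Int.odd_iff.mp hd₁, Int.odd_iff.mp hd₂]) hpar

end TwoPrime

theorem Padic.exists_mul_eq_padicInt_of_ne_zero {p : ℕ} [Fact p.Prime] {ι : Type*} [Finite ι]
    {v : ι → ℚ_[p]} (hv : v ≠ 0) :
    ∃ (x : ℚ_[p]) (w : ι → ℤ_[p]), (∀ j, (w j : ℚ_[p]) = x * v j) ∧ ∃ i, w i = 1 := by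
  obtain ⟨i, hi⟩ := Function.ne_iff.mp hv
  have : Nonempty ι := ⟨i⟩
  obtain ⟨i₀, hmax⟩ := Finite.exists_max fun j ↦ ‖v j‖
  have h₀ : v i₀ ≠ 0 := norm_pos_iff.mp ((norm_pos_iff.mpr hi).trans_le (hmax i))
  have hle (j : ι) : ‖(v i₀)⁻¹ * v j‖ ≤ 1 := by
    rw [norm_mul, norm_inv, inv_mul_le_one₀ (norm_pos_iff.mpr h₀)]
    exact hmax j
  exact ⟨(v i₀)⁻¹, fun j ↦ ⟨_, hle j⟩, fun _ ↦ rfl, i₀, PadicInt.ext (inv_mul_cancel₀ h₀)⟩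

theorem stmt4_general (a b c n : ℕ) (ha : 0 < a)
    (h : a ^ 2 + b ^ 2 = 2 * c ^ 2) (hcop : Nat.gcd n (2 * a * b * c) = 1)
    (d₁ d₂ d₃ : ℤ) (h1 : Squarefree d₁) (h2 : Squarefree d₂) (h3 : Squarefree d₃)
    (hsq : ∃ m : ℤ, d₁ * d₂ * d₃ = m ^ 2)
    (hsol : ∃ t u₁ u₂ u₃ : ℚ_[2], ¬(t = 0 ∧ u₁ = 0 ∧ u₂ = 0 ∧ u₃ = 0) ∧
      -(b : ℚ_[2]) ^ 2 * (n : ℚ_[2]) * t ^ 2 + (d₂ : ℚ_[2]) * u₂ ^ 2 - (d₃ : ℚ_[2]) * u₃ ^ 2 = 0 ∧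
      -(a : ℚ_[2]) ^ 2 * (n : ℚ_[2]) * t ^ 2 + (d₃ : ℚ_[2]) * u₃ ^ 2 - (d₁ : ℚ_[2]) * u₁ ^ 2 = 0 ∧
      2 * (c : ℚ_[2]) ^ 2 * (n : ℚ_[2]) * t ^ 2 + (d₁ : ℚ_[2]) * u₁ ^ 2 - (d₂ : ℚ_[2]) * u₂ ^ 2 = 0) :
    d₁ % 2 = d₂ % 2 := by
  by_contra hpar
  have hn : Odd n :=
    Nat.coprime_two_right.mp (Nat.Coprime.coprime_dvd_right ⟨a * b * c, by ring⟩ hcop)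
  obtain ⟨g, a₀, b₀, c₀, hg, rfl, rfl, rfl, ha₀, hb₀⟩ :=
    Nat.exists_odd_of_sq_add_sq_eq_two_mul_sq h ha
  obtain ⟨t, u₁, u₂, u₃, hnz, E₁, E₂, E₃⟩ := hsol
  have hv : ![(g : ℚ_[2]) * t, u₁, u₂, u₃] ≠ 0 := by
    contrapose! hnz
    simpa [hg.ne'] using hnz
  obtain ⟨x, W, hW, i, hi⟩ := Padic.exists_mul_eq_padicInt_of_ne_zero hv
  have hp : Prime (2 : ℤ_[2]) := by simpa using PadicInt.prime_p (p := 2)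
  have hcast : ((2 : ℤ_[2]) : ℚ_[2]) = 2 := rfl
  push_cast at E₁ E₂ E₃
  have hdvd := hp.two_dvd_of_parity_ne (α := a₀ ^ 2 * n) (β := b₀ ^ 2 * n) (γ := c₀ ^ 2 * n)
    (by exact_mod_cast (ha₀.pow.mul hn)) (by exact_mod_cast (hb₀.pow.mul hn)) h1 h2 h3 hsq hpar
    (T := W 0) (U₁ := W 1) (U₂ := W 2) (U₃ := W 3)
    (PadicInt.ext (by push_cast [hcast, hW]; linear_combination x ^ 2 * E₁))
    (PadicInt.ext (by push_cast [hcast, hW]; linear_combination x ^ 2 * E₂))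
    (PadicInt.ext (by push_cast [hcast, hW]; linear_combination x ^ 2 * E₃))
  have hall : ∀ j, 2 ∣ W j := by
    intro j
    fin_cases j <;> simp [hdvd]
  exact hp.not_isUnit (isUnit_of_dvd_one (hi ▸ hall i))

/-- if the homogeneous space has a nonzero 2-adic point,
then d₁ and d₂ have the same parity. -/
theorem stmt4 (a b c n : ℕ) (ha : 0 < a) (hb : 0 < b) (hc : 0 < c) (hn : 0 < n)
    (h : a ^ 2 + b ^ 2 = 2 * c ^ 2) (hcop : Nat.gcd n (2 * a * b * c) = 1)
    (hsf : Squarefree n)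
    (d₁ d₂ d₃ : ℤ) (h1 : Squarefree d₁) (h2 : Squarefree d₂) (h3 : Squarefree d₃)
    (hsq : ∃ m : ℤ, d₁ * d₂ * d₃ = m ^ 2)
    (hsol : ∃ t u₁ u₂ u₃ : ℚ_[2], ¬(t = 0 ∧ u₁ = 0 ∧ u₂ = 0 ∧ u₃ = 0) ∧
      -(b : ℚ_[2]) ^ 2 * (n : ℚ_[2]) * t ^ 2 + (d₂ : ℚ_[2]) * u₂ ^ 2 - (d₃ : ℚ_[2]) * u₃ ^ 2 = 0 ∧
      -(a : ℚ_[2]) ^ 2 * (n : ℚ_[2]) * t ^ 2 + (d₃ : ℚ_[2]) * u₃ ^ 2 - (d₁ : ℚ_[2]) * u₁ ^ 2 = 0 ∧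
      2 * (c : ℚ_[2]) ^ 2 * (n : ℚ_[2]) * t ^ 2 + (d₁ : ℚ_[2]) * u₁ ^ 2 - (d₂ : ℚ_[2]) * u₂ ^ 2 = 0) :
    d₁ % 2 = d₂ % 2 :=
  stmt4_general a b c n ha h hcop d₁ d₂ d₃ h1 h2 h3 hsq hsol
end

section
/- Let a, b, c, n be positive integers with a² + b² = 2c², and d₁, d₂, d₃ nonzero square-free integers with d₁d₂d₃ a perfect square. The system -b²n t² + d₂u₂² - d₃u₃² = 0, -a²n t² + d₃u₃² - d₁u₁² = 0, 2c²n t² + d₁u₁² - d₂u₂² = 0 has a nonzero real solution if and only if d₂ > 0. -/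
theorem exists_mul_sq_eq_of_div_nonneg {d x : ℝ} (hd : d ≠ 0) (h : 0 ≤ x / d) :
    ∃ u : ℝ, d * u ^ 2 = x :=
  ⟨√(x / d), by rw [Real.sq_sqrt h]; field_simp⟩

/-- Since `d₁d₃ < 0`, the form in `e₁` (when `d₃ > 0`) or the one in `e₂` (when `d₁ > 0`)
is negative definite in the variables it involves. -/
theorem eq_zero_of_system_of_nonpos {K : Type*} [Field K] [LinearOrder K] [IsStrictOrderedRing K]
    {p q d₁ d₂ d₃ t u₁ u₂ u₃ : K} (hp : 0 < p) (hq : 0 < q) (hd : 0 < d₁ * d₂ * d₃)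
    (hd₂ : d₂ ≤ 0)
    (e₁ : -q * t ^ 2 + d₂ * u₂ ^ 2 - d₃ * u₃ ^ 2 = 0)
    (e₂ : -p * t ^ 2 + d₃ * u₃ ^ 2 - d₁ * u₁ ^ 2 = 0) :
    t = 0 ∧ u₁ = 0 ∧ u₂ = 0 ∧ u₃ = 0 := by
  have hd₁ : d₁ ≠ 0 := by rintro rfl; simp at hd
  have hd₂' : d₂ ≠ 0 := by rintro rfl; simp at hd
  have hd₃ : d₃ ≠ 0 := by rintro rfl; simp at hd
  have hd₁₃ : d₁ * d₃ < 0 := by nlinarith [hd₂.lt_of_ne hd₂']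
  have hB : d₂ * u₂ ^ 2 ≤ 0 := mul_nonpos_of_nonpos_of_nonneg hd₂ (sq_nonneg _)
  have ht : 0 ≤ t ^ 2 := sq_nonneg t
  suffices t ^ 2 = 0 ∧ d₁ * u₁ ^ 2 = 0 ∧ d₂ * u₂ ^ 2 = 0 ∧ d₃ * u₃ ^ 2 = 0 by
    simpa [hd₁, hd₂', hd₃] using this
  rcases hd₃.lt_or_gt with hd₃ | hd₃
  · have hd₁ : 0 < d₁ := by nlinarith
    have hA : 0 ≤ d₁ * u₁ ^ 2 := by positivity
    have hC : d₃ * u₃ ^ 2 ≤ 0 := mul_nonpos_of_nonpos_of_nonneg hd₃.le (sq_nonneg _)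
    have ht0 : t ^ 2 = 0 := by nlinarith
    refine ⟨ht0, ?_, ?_, ?_⟩ <;> nlinarith
  · have hC : 0 ≤ d₃ * u₃ ^ 2 := by positivity
    have ht0 : t ^ 2 = 0 := by nlinarith
    refine ⟨ht0, ?_, ?_, ?_⟩ <;> nlinarith

theorem exists_system_solution_of_pos {p q d₁ d₂ d₃ : ℝ} (hp : 0 ≤ p) (hq : 0 ≤ q)
    (hd : 0 < d₁ * d₂ * d₃) (hd₂ : 0 < d₂) :
    ∃ u₁ u₂ u₃ : ℝ, -q + d₂ * u₂ ^ 2 - d₃ * u₃ ^ 2 = 0 ∧ -p + d₃ * u₃ ^ 2 - d₁ * u₁ ^ 2 = 0 := by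
  have hd₁₃ : 0 < d₁ * d₃ := by nlinarith
  rcases (left_ne_zero_of_mul hd₁₃.ne').lt_or_gt with hd₁ | hd₁
  · have hd₃ : d₃ < 0 := by nlinarith
    obtain ⟨u₁, hu₁⟩ := exists_mul_sq_eq_of_div_nonneg (x := -p) hd₁.ne
      (div_nonneg_of_nonpos (neg_nonpos.mpr hp) hd₁.le)
    obtain ⟨u₂, hu₂⟩ := exists_mul_sq_eq_of_div_nonneg hd₂.ne' (div_nonneg hq hd₂.le)
    exact ⟨u₁, u₂, 0, by simp [hu₂], by simp [hu₁]⟩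
  · have hd₃ : 0 < d₃ := by nlinarith
    obtain ⟨u₂, hu₂⟩ := exists_mul_sq_eq_of_div_nonneg hd₂.ne'
      (div_nonneg (add_nonneg hp hq) hd₂.le)
    obtain ⟨u₃, hu₃⟩ := exists_mul_sq_eq_of_div_nonneg hd₃.ne' (div_nonneg hp hd₃.le)
    exact ⟨0, u₂, u₃, by rw [hu₂, hu₃]; ring, by simp [hu₃]⟩

theorem stmt6_general (a b c n : ℕ) (ha : 0 < a) (hb : 0 < b) (hn : 0 < n)
    (h : a ^ 2 + b ^ 2 = 2 * c ^ 2)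
    (d₁ d₂ d₃ : ℤ)
    (hne1 : d₁ ≠ 0) (hne2 : d₂ ≠ 0) (hne3 : d₃ ≠ 0)
    (hsq : ∃ m : ℤ, d₁ * d₂ * d₃ = m ^ 2) :
    (∃ t u₁ u₂ u₃ : ℝ, ¬(t = 0 ∧ u₁ = 0 ∧ u₂ = 0 ∧ u₃ = 0) ∧
      -(b : ℝ) ^ 2 * (n : ℝ) * t ^ 2 + (d₂ : ℝ) * u₂ ^ 2 - (d₃ : ℝ) * u₃ ^ 2 = 0 ∧
      -(a : ℝ) ^ 2 * (n : ℝ) * t ^ 2 + (d₃ : ℝ) * u₃ ^ 2 - (d₁ : ℝ) * u₁ ^ 2 = 0 ∧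
      2 * (c : ℝ) ^ 2 * (n : ℝ) * t ^ 2 + (d₁ : ℝ) * u₁ ^ 2 - (d₂ : ℝ) * u₂ ^ 2 = 0)
    ↔ 0 < d₂ := by
  obtain ⟨m, hm⟩ := hsq
  have hd : 0 < d₁ * d₂ * d₃ :=
    ((sq_nonneg m).trans_eq hm.symm).lt_of_ne (mul_ne_zero (mul_ne_zero hne1 hne2) hne3).symm
  have hdR : (0 : ℝ) < d₁ * d₂ * d₃ := by exact_mod_cast hd
  have hR : (a : ℝ) ^ 2 + b ^ 2 = 2 * c ^ 2 := by exact_mod_cast h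
  have hp : (0 : ℝ) < a ^ 2 * n := by positivity
  have hq : (0 : ℝ) < b ^ 2 * n := by positivity
  rw [← Int.cast_pos (R := ℝ)]
  constructor
  · rintro ⟨t, u₁, u₂, u₃, hnz, e₁, e₂, -⟩
    exact not_le.mp fun hd₂ =>
      hnz (eq_zero_of_system_of_nonpos hp hq hdR hd₂ (by linarith) (by linarith))
  · intro hd₂
    obtain ⟨u₁, u₂, u₃, e₁, e₂⟩ := exists_system_solution_of_pos hp.le hq.le hdR hd₂
    refine ⟨1, u₁, u₂, u₃, by simp, by linarith, by linarith, ?_⟩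
    linear_combination -e₁ - e₂ - (n : ℝ) * hR

/-- the homogeneous space has a nonzero real point iff d₂ > 0. -/
theorem stmt6 (a b c n : ℕ) (ha : 0 < a) (hb : 0 < b) (hc : 0 < c) (hn : 0 < n)
    (h : a ^ 2 + b ^ 2 = 2 * c ^ 2)
    (d₁ d₂ d₃ : ℤ) (h1 : Squarefree d₁) (h2 : Squarefree d₂) (h3 : Squarefree d₃)
    (hne1 : d₁ ≠ 0) (hne2 : d₂ ≠ 0) (hne3 : d₃ ≠ 0)
    (hsq : ∃ m : ℤ, d₁ * d₂ * d₃ = m ^ 2) :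
    (∃ t u₁ u₂ u₃ : ℝ, ¬(t = 0 ∧ u₁ = 0 ∧ u₂ = 0 ∧ u₃ = 0) ∧
      -(b : ℝ) ^ 2 * (n : ℝ) * t ^ 2 + (d₂ : ℝ) * u₂ ^ 2 - (d₃ : ℝ) * u₃ ^ 2 = 0 ∧
      -(a : ℝ) ^ 2 * (n : ℝ) * t ^ 2 + (d₃ : ℝ) * u₃ ^ 2 - (d₁ : ℝ) * u₁ ^ 2 = 0 ∧
      2 * (c : ℝ) ^ 2 * (n : ℝ) * t ^ 2 + (d₁ : ℝ) * u₁ ^ 2 - (d₂ : ℝ) * u₂ ^ 2 = 0)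
    ↔ 0 < d₂ :=
  stmt6_general a b c n ha hb hn h d₁ d₂ d₃ hne1 hne2 hne3 hsq
end

section
/- Let p be an odd prime not dividing 2abc, where a² + b² = 2c² and n is a positive square-free integer coprime to 2abc, and let d₁, d₂, d₃ be square-free integers with d₁d₂d₃ a perfect square. If p divides n and p ∤ d₁, p ∤ d₂, then the system -b²n t² + d₂u₂² - d₃u₃² = 0, -a²n t² + d₃u₃² - d₁u₁² = 0, 2c²n t² + d₁u₁² - d₂u₂² = 0 has a nonzero solution in ℚ_p⁴ if and only if d₁ and d₂ are both quadratic residues mod p. -/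
section Helpers

variable {p : ℕ} [hp : Fact p.Prime]

lemma myNormInt {d : ℤ} (hd : ¬ (p : ℤ) ∣ d) : ‖(d : ℚ_[p])‖ = 1 := by
  rcases lt_or_eq_of_le (Padic.norm_int_le_one (p := p) d) with h | h
  · exact absurd ((Padic.norm_intCast_lt_one_iff (k := d)).mp h) hd
  · exact h

lemma myToZModZero (x : ℤ_[p]) (hx : ‖x‖ < 1) : PadicInt.toZMod x = 0 := by
  rw [← RingHom.mem_ker, PadicInt.ker_toZMod, IsLocalRing.mem_maximalIdeal, mem_nonunits_iff,
    PadicInt.isUnit_iff]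
  exact ne_of_lt hx

lemma myToZModNeZero (x : ℤ_[p]) (hx : PadicInt.toZMod x ≠ 0) : ‖x‖ = 1 := by
  rcases lt_or_eq_of_le x.2 with h | h
  · exact absurd (myToZModZero x h) hx
  · exact h

lemma myZModLtOne (x : ℤ_[p]) (hx : PadicInt.toZMod x = 0) : ‖x‖ < 1 := by
  rcases lt_or_eq_of_le x.2 with h | h
  · exact h
  · exact absurd h (by
      intro h1
      rw [← RingHom.mem_ker, PadicInt.ker_toZMod, IsLocalRing.mem_maximalIdeal,
        mem_nonunits_iff, PadicInt.isUnit_iff] at hx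
      exact hx h1)

lemma myValInt {d : ℤ} (hd : ¬ (p : ℤ) ∣ d) : ((d : ℚ_[p])).valuation = 0 := by
  have hd0 : (d : ℚ_[p]) ≠ 0 := by
    simp only [ne_eq, Int.cast_eq_zero]
    rintro rfl; exact hd (dvd_zero _)
  have h1 : (p : ℝ) ^ (-((d : ℚ_[p]).valuation)) = (p : ℝ) ^ (0 : ℤ) := by
    rw [← Padic.norm_eq_zpow_neg_valuation hd0, myNormInt hd, zpow_zero]
  have hp1 : (1 : ℝ) < (p : ℝ) := by exact_mod_cast hp.out.one_lt
  have := (zpow_right_strictMono₀ hp1).injective h1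
  omega

lemma myValSq {x : ℚ_[p]} (hx : x ≠ 0) : (x ^ 2).valuation = 2 * x.valuation := by
  rw [sq, Padic.valuation_mul hx hx]; ring

lemma myValEqOfNormEq {x y : ℚ_[p]} (hx : x ≠ 0) (hy : y ≠ 0) (h : ‖x‖ = ‖y‖) :
    x.valuation = y.valuation := by
  rw [Padic.norm_eq_zpow_neg_valuation hx, Padic.norm_eq_zpow_neg_valuation hy] at h
  have hp1 : (1 : ℝ) < (p : ℝ) := by exact_mod_cast hp.out.one_lt
  have := (zpow_right_strictMono₀ hp1).injective h
  omega

lemma myHensel (hp2 : p ≠ 2) {d : ℤ} (hd : ¬ (p : ℤ) ∣ d)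
    (hsq : IsSquare ((d : ZMod p))) : ∃ s : ℚ_[p], (d : ℚ_[p]) = s ^ 2 := by
  obtain ⟨s, hs⟩ := hsq
  have hdz : (d : ZMod p) ≠ 0 := by
    rw [Ne, ZMod.intCast_zmod_eq_zero_iff_dvd]; exact hd
  have hs0 : s ≠ 0 := by rintro rfl; simp at hs; exact hdz hs
  set a : ℤ_[p] := (s.val : ℤ_[p]) with ha
  have hta : PadicInt.toZMod a = s := by
    rw [ha, map_natCast, ZMod.natCast_zmod_val]
  set F : Polynomial ℤ_[p] := Polynomial.X ^ 2 - Polynomial.C (d : ℤ_[p]) with hF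
  have hevalF : ∀ z : ℤ_[p], F.eval z = z ^ 2 - (d : ℤ_[p]) := by
    intro z; simp [hF]
  have hderiv : F.derivative = Polynomial.C 2 * Polynomial.X := by
    simp [hF, Polynomial.derivative_X_pow, one_add_one_eq_two]
  have hyd : F.derivative.eval a = 2 * a := by rw [hderiv]; simp
  have hnorm2a : ‖F.derivative.eval a‖ = 1 := by
    rw [hyd]
    apply myToZModNeZero
    rw [map_mul, hta, map_ofNat]
    have h2 : (2 : ZMod p) ≠ 0 := by
      have : ((2 : ℕ) : ZMod p) ≠ 0 := by
        rw [Ne, ZMod.natCast_eq_zero_iff]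
        intro hdvd
        exact hp2 ((Nat.prime_dvd_prime_iff_eq hp.out Nat.prime_two).mp hdvd)
      simpa using this
    exact mul_ne_zero h2 hs0
  have hnorm : ‖F.eval a‖ < ‖F.derivative.eval a‖ ^ 2 := by
    rw [hnorm2a, one_pow, hevalF]
    apply myZModLtOne
    rw [map_sub, map_pow, hta, map_intCast, hs, sq, sub_self]
  obtain ⟨z, hz, -⟩ := hensels_lemma hnorm
  rw [Polynomial.coe_aeval_eq_eval, hevalF, sub_eq_zero] at hz
  refine ⟨(z : ℚ_[p]), ?_⟩
  rw [← PadicInt.coe_pow, hz, PadicInt.coe_intCast]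

lemma keyA {α β : ℤ} (hα : ¬ (p : ℤ) ∣ α) (hβ : ¬ (p : ℤ) ∣ β) {x y w : ℚ_[p]}
    (hxy : ¬(x = 0 ∧ y = 0)) (hw : w ≠ 0 → Odd w.valuation)
    (heq : (α : ℚ_[p]) * x ^ 2 - (β : ℚ_[p]) * y ^ 2 = w) :
    IsSquare ((α : ZMod p) * (β : ZMod p)) := by
  have hα0 : (α : ℚ_[p]) ≠ 0 := by
    simp only [ne_eq, Int.cast_eq_zero]; rintro rfl; exact hα (dvd_zero _)
  have hβ0 : (β : ℚ_[p]) ≠ 0 := by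
    simp only [ne_eq, Int.cast_eq_zero]; rintro rfl; exact hβ (dvd_zero _)
  have hnα : ‖(α : ℚ_[p])‖ = 1 := myNormInt hα
  have hnβ : ‖(β : ℚ_[p])‖ = 1 := myNormInt hβ
  have hvalA : ∀ z : ℚ_[p], z ≠ 0 → ((α : ℚ_[p]) * z ^ 2).valuation = 2 * z.valuation := by
    intro z hz
    rw [Padic.valuation_mul hα0 (pow_ne_zero 2 hz), myValSq hz, myValInt hα, zero_add]
  have hvalB : ∀ z : ℚ_[p], z ≠ 0 → ((β : ℚ_[p]) * z ^ 2).valuation = 2 * z.valuation := by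
    intro z hz
    rw [Padic.valuation_mul hβ0 (pow_ne_zero 2 hz), myValSq hz, myValInt hβ, zero_add]
  have hy : y ≠ 0 := by
    rintro rfl
    have hx : x ≠ 0 := fun hx => hxy ⟨hx, rfl⟩
    have hw0 : w ≠ 0 := by
      rw [← heq]; simpa using mul_ne_zero hα0 (pow_ne_zero 2 hx)
    have hveq : w = (α : ℚ_[p]) * x ^ 2 := by rw [← heq]; ring
    have hv : w.valuation = 2 * x.valuation := by
      rw [hveq]; exact hvalA x hx
    rcases hw hw0 with ⟨k, hk⟩
    omega
  have hx : x ≠ 0 := by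
    rintro rfl
    have hw0 : w ≠ 0 := by
      rw [← heq]; simpa using (neg_ne_zero.mpr (mul_ne_zero hβ0 (pow_ne_zero 2 hy)))
    have hv : w.valuation = 2 * y.valuation := by
      have hveq : w = -((β : ℚ_[p]) * y ^ 2) := by rw [← heq]; ring
      have hne : -((β : ℚ_[p]) * y ^ 2) ≠ 0 := neg_ne_zero.mpr (mul_ne_zero hβ0 (pow_ne_zero 2 hy))
      rw [hveq, myValEqOfNormEq hne (mul_ne_zero hβ0 (pow_ne_zero 2 hy)) (norm_neg _)]
      exact hvalB y hy
    rcases hw hw0 with ⟨k, hk⟩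
    omega
  have hnx : ‖(α : ℚ_[p]) * x ^ 2‖ = ‖x‖ ^ 2 := by
    rw [norm_mul, hnα, one_mul, norm_pow]
  have hny : ‖(β : ℚ_[p]) * y ^ 2‖ = ‖y‖ ^ 2 := by
    rw [norm_mul, hnβ, one_mul, norm_pow]
  have hxy_norm : ‖x‖ = ‖y‖ := by
    by_contra hne
    have hne2 : ‖(α : ℚ_[p]) * x ^ 2‖ ≠ ‖-((β : ℚ_[p]) * y ^ 2)‖ := by
      rw [hnx, norm_neg, hny]
      intro hcon
      exact hne (by
        have h0x : (0:ℝ) ≤ ‖x‖ := norm_nonneg x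
        have h0y : (0:ℝ) ≤ ‖y‖ := norm_nonneg y
        nlinarith)
    have hmax : ‖w‖ = max (‖x‖ ^ 2) (‖y‖ ^ 2) := by
      rw [← heq, sub_eq_add_neg, Padic.add_eq_max_of_ne hne2, hnx, norm_neg, hny]
    have hw0 : w ≠ 0 := by
      intro h0
      rw [h0, norm_zero] at hmax
      have hx0 : (0:ℝ) < ‖x‖ := norm_pos_iff.mpr hx
      have : (0:ℝ) < max (‖x‖ ^ 2) (‖y‖ ^ 2) :=
        lt_max_of_lt_left (by positivity)
      linarith [this, hmax.symm]
    have hveven : Even w.valuation := by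
      rcases le_or_gt (‖x‖^2) (‖y‖^2) with hle | hlt
      · have : ‖w‖ = ‖(β : ℚ_[p]) * y ^ 2‖ := by rw [hmax, max_eq_right hle, hny]
        have hv := myValEqOfNormEq ?_ ?_ this
        · rw [hv, hvalB y hy]; exact even_two_mul _
        · exact hw0
        · exact mul_ne_zero hβ0 (pow_ne_zero 2 hy)
      · have : ‖w‖ = ‖(α : ℚ_[p]) * x ^ 2‖ := by rw [hmax, max_eq_left hlt.le, hnx]
        have hv := myValEqOfNormEq ?_ ?_ this
        · rw [hv, hvalA x hx]; exact even_two_mul _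
        · exact hw0
        · exact mul_ne_zero hα0 (pow_ne_zero 2 hx)
    rcases hw hw0 with ⟨k, hk⟩
    rcases hveven with ⟨j, hj⟩
    omega
  have hwlt : ‖w‖ < ‖y‖ ^ 2 := by
    have hle : ‖w‖ ≤ ‖y‖ ^ 2 := by
      rw [← heq, sub_eq_add_neg]
      calc ‖(α : ℚ_[p]) * x ^ 2 + -((β : ℚ_[p]) * y ^ 2)‖
          ≤ max ‖(α : ℚ_[p]) * x ^ 2‖ ‖-((β : ℚ_[p]) * y ^ 2)‖ := Padic.nonarchimedean _ _
        _ = ‖y‖ ^ 2 := by rw [hnx, norm_neg, hny, hxy_norm, max_self]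
    rcases lt_or_eq_of_le hle with h | h
    · exact h
    · exfalso
      have hy0 : (0:ℝ) < ‖y‖ := norm_pos_iff.mpr hy
      have hw0 : w ≠ 0 := by
        intro h0; rw [h0, norm_zero] at h
        have : (0:ℝ) < ‖y‖ ^ 2 := by positivity
        linarith
      have : ‖w‖ = ‖(β : ℚ_[p]) * y ^ 2‖ := by rw [h, hny]
      have hv := myValEqOfNormEq hw0 (mul_ne_zero hβ0 (pow_ne_zero 2 hy)) this
      rcases hw hw0 with ⟨k, hk⟩
      rw [hv, hvalB y hy] at hk
      omega
  have hy0 : (0:ℝ) < ‖y‖ := norm_pos_iff.mpr hy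
  have hz1 : ‖x / y‖ ≤ 1 := by
    rw [norm_div, hxy_norm, div_self (ne_of_gt hy0)]
  have hω1 : ‖w / y ^ 2‖ < 1 := by
    rw [norm_div, norm_pow, div_lt_one (by positivity)]
    exact hwlt
  set Z : ℤ_[p] := ⟨x / y, hz1⟩ with hZ
  set W : ℤ_[p] := ⟨w / y ^ 2, le_of_lt hω1⟩ with hW
  have hEQ : (α : ℤ_[p]) * Z ^ 2 - (β : ℤ_[p]) = W := by
    apply Subtype.coe_injective
    show ((↑α * Z ^ 2 - ↑β : ℤ_[p]) : ℚ_[p]) = (W : ℚ_[p])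
    push_cast
    simp only [hZ, hW]
    field_simp
    linear_combination heq
  have hmap := congrArg PadicInt.toZMod hEQ
  rw [map_sub, map_mul, map_pow, map_intCast, map_intCast,
    myToZModZero W hω1] at hmap
  have hβζ : (β : ZMod p) = (α : ZMod p) * (PadicInt.toZMod Z) ^ 2 := by
    linear_combination -hmap
  exact ⟨(α : ZMod p) * PadicInt.toZMod Z, by rw [hβζ]; ring⟩

end Helpers

/-- local solvability at an odd prime p ∣ n with p ∤ d₁d₂,
in terms of d₁, d₂ being quadratic residues mod p. -/
theorem stmt7 (a b c n : ℕ) (ha : 0 < a) (hb : 0 < b) (hc : 0 < c) (hn : 0 < n)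
    (h : a ^ 2 + b ^ 2 = 2 * c ^ 2) (hcop : Nat.gcd n (2 * a * b * c) = 1)
    (hsf : Squarefree n)
    (p : ℕ) [hp : Fact p.Prime] (hp2 : p ≠ 2) (hpn : p ∣ n)
    (hpabc : ¬ p ∣ 2 * a * b * c)
    (d₁ d₂ d₃ : ℤ) (h1 : Squarefree d₁) (h2 : Squarefree d₂) (h3 : Squarefree d₃)
    (hsq : ∃ m : ℤ, d₁ * d₂ * d₃ = m ^ 2)
    (hd1 : ¬ (p : ℤ) ∣ d₁) (hd2 : ¬ (p : ℤ) ∣ d₂) :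
    (∃ t u₁ u₂ u₃ : ℚ_[p], ¬(t = 0 ∧ u₁ = 0 ∧ u₂ = 0 ∧ u₃ = 0) ∧
      -(b : ℚ_[p]) ^ 2 * (n : ℚ_[p]) * t ^ 2 + (d₂ : ℚ_[p]) * u₂ ^ 2 - (d₃ : ℚ_[p]) * u₃ ^ 2 = 0 ∧
      -(a : ℚ_[p]) ^ 2 * (n : ℚ_[p]) * t ^ 2 + (d₃ : ℚ_[p]) * u₃ ^ 2 - (d₁ : ℚ_[p]) * u₁ ^ 2 = 0 ∧
      2 * (c : ℚ_[p]) ^ 2 * (n : ℚ_[p]) * t ^ 2 + (d₁ : ℚ_[p]) * u₁ ^ 2 - (d₂ : ℚ_[p]) * u₂ ^ 2 = 0)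
    ↔ (IsSquare ((d₁ : ZMod p)) ∧ IsSquare ((d₂ : ZMod p))) := by
  obtain ⟨m, hm⟩ := hsq
  have hpZ : Prime (p : ℤ) := Nat.prime_iff_prime_int.mp hp.out
  -- p does not divide d₃
  have hd3 : ¬ (p : ℤ) ∣ d₃ := by
    intro hdvd
    have hpm : (p : ℤ) ∣ m := by
      apply hpZ.dvd_of_dvd_pow (n := 2)
      rw [← hm]
      exact Dvd.dvd.mul_left hdvd _
    obtain ⟨e, he⟩ := hdvd
    obtain ⟨m', hm'⟩ := hpm
    have hcan : d₁ * d₂ * e = (p : ℤ) * m' ^ 2 := by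
      have hpne : (p : ℤ) ≠ 0 := by exact_mod_cast hp.out.ne_zero
      apply mul_left_cancel₀ hpne
      rw [show (p:ℤ) * (d₁ * d₂ * e) = d₁ * d₂ * ((p:ℤ) * e) from by ring, ← he, hm, hm']
      ring
    have hpe : (p : ℤ) ∣ e := by
      have hdd : (p : ℤ) ∣ d₁ * d₂ * e := ⟨m' ^ 2, hcan⟩
      rcases hpZ.dvd_mul.mp hdd with hx | hx
      · rcases hpZ.dvd_mul.mp hx with hy | hy
        · exact absurd hy hd1
        · exact absurd hy hd2
      · exact hx
    obtain ⟨f, hf⟩ := hpe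
    have : IsUnit ((p : ℤ)) := h3 (p : ℤ) ⟨f, by rw [he, hf]; ring⟩
    exact hpZ.not_unit this
  -- p does not divide m
  have hdm : ¬ (p : ℤ) ∣ m := by
    intro hdvd
    have : (p : ℤ) ∣ d₁ * d₂ * d₃ := by rw [hm]; exact dvd_pow hdvd two_ne_zero
    rcases hpZ.dvd_mul.mp this with hx | hx
    · rcases hpZ.dvd_mul.mp hx with hy | hy
      · exact hd1 hy
      · exact hd2 hy
    · exact hd3 hx
  -- basic nonvanishing facts and non-divisibility
  have hpa : ¬ p ∣ a := fun hd => hpabc (hd.trans ⟨2 * b * c, by ring⟩)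
  have hpb : ¬ p ∣ b := fun hd => hpabc (hd.trans ⟨2 * a * c, by ring⟩)
  have hpc : ¬ p ∣ c := fun hd => hpabc (hd.trans ⟨2 * a * b, by ring⟩)
  have hp2' : ¬ p ∣ 2 := fun hd => hpabc (hd.trans ⟨a * b * c, by ring⟩)
  obtain ⟨n', hn'⟩ := hpn
  have hpn' : ¬ p ∣ n' := by
    intro hd
    obtain ⟨k, hk⟩ := hd
    exact hp.out.not_isUnit (hsf p ⟨k, by rw [hn', hk]; ring⟩)
  have hn'0 : n' ≠ 0 := by rintro rfl; rw [mul_zero] at hn'; exact hn.ne' hn'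
  have hd10 : d₁ ≠ 0 := h1.ne_zero
  have hd20 : d₂ ≠ 0 := h2.ne_zero
  have hd30 : d₃ ≠ 0 := h3.ne_zero
  have hm0 : m ≠ 0 := by rintro rfl; simp at hm; rcases hm with hm|hm|hm <;> simp_all
  have hc0 : (c : ℚ_[p]) ≠ 0 := Nat.cast_ne_zero.mpr hc.ne'
  have ha0 : (a : ℚ_[p]) ≠ 0 := Nat.cast_ne_zero.mpr ha.ne'
  have hb0 : (b : ℚ_[p]) ≠ 0 := Nat.cast_ne_zero.mpr hb.ne'
  have hn0 : (n : ℚ_[p]) ≠ 0 := Nat.cast_ne_zero.mpr hn.ne'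
  have h20 : (2 : ℚ_[p]) ≠ 0 := two_ne_zero
  have hd1Q : (d₁ : ℚ_[p]) ≠ 0 := Int.cast_ne_zero.mpr hd10
  have hd2Q : (d₂ : ℚ_[p]) ≠ 0 := Int.cast_ne_zero.mpr hd20
  have hd3Q : (d₃ : ℚ_[p]) ≠ 0 := Int.cast_ne_zero.mpr hd30
  have hmQ : (m : ℚ_[p]) ≠ 0 := Int.cast_ne_zero.mpr hm0
  -- valuation of n is 1
  have hvn : ((n : ℚ_[p])).valuation = 1 := by
    have hcast : ((n : ℚ_[p])) = (p : ℚ_[p]) * (n' : ℚ_[p]) := by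
      rw [hn']; push_cast; ring
    have hp0 : ((p : ℕ) : ℚ_[p]) ≠ 0 := Nat.cast_ne_zero.mpr hp.out.ne_zero
    have hn'Q : ((n' : ℕ) : ℚ_[p]) ≠ 0 := Nat.cast_ne_zero.mpr hn'0
    rw [hcast, Padic.valuation_mul hp0 hn'Q, Padic.valuation_p]
    have : ((n' : ℤ) : ℚ_[p]).valuation = 0 := myValInt (by exact_mod_cast hpn')
    push_cast at this
    rw [this]
    norm_num
  -- oddness of valuation of r * n * t²  for p ∤ r
  have hOdd : ∀ (r : ℕ) (t : ℚ_[p]), ¬ p ∣ r →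
      ((r : ℚ_[p]) * (n : ℚ_[p]) * t ^ 2 ≠ 0 → Odd ((r : ℚ_[p]) * (n : ℚ_[p]) * t ^ 2).valuation) := by
    intro r t hr hne
    have hrQ : (r : ℚ_[p]) ≠ 0 := by
      intro h0
      apply hne
      rw [h0, zero_mul, zero_mul]
    have ht : t ≠ 0 := by
      intro h0; apply hne; rw [h0]; ring
    have hvr : ((r : ℚ_[p])).valuation = 0 := by
      have : ((r : ℤ) : ℚ_[p]).valuation = 0 := myValInt (by exact_mod_cast hr)
      push_cast at this; exact this
    rw [Padic.valuation_mul (mul_ne_zero hrQ hn0) (pow_ne_zero 2 ht),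
      Padic.valuation_mul hrQ hn0, hvr, hvn, myValSq ht]
    exact ⟨t.valuation, by ring⟩
  constructor
  · rintro ⟨t, u₁, u₂, u₃, hne, e1, e2, e3⟩
    -- Application 1: from e3, d₂ u₂² - d₁ u₁² = (2c²) n t²
    have key1 : IsSquare ((d₂ : ZMod p) * (d₁ : ZMod p)) := by
      apply keyA hd2 hd1 (x := u₂) (y := u₁) (w := ((2 * c ^ 2 : ℕ) : ℚ_[p]) * (n : ℚ_[p]) * t ^ 2)
      · rintro ⟨h2', h1'⟩
        rw [h1', h2'] at e3
        have ht : t = 0 := by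
          have : 2 * (c : ℚ_[p]) ^ 2 * (n : ℚ_[p]) * t ^ 2 = 0 := by linear_combination e3
          rcases mul_eq_zero.mp this with h' | h'
          · exact absurd h' (by
              exact mul_ne_zero (mul_ne_zero h20 (pow_ne_zero 2 hc0)) hn0)
          · exact pow_eq_zero_iff (two_ne_zero) |>.mp h'
        rw [ht, h1'] at e2
        have hu3 : u₃ = 0 := by
          have : (d₃ : ℚ_[p]) * u₃ ^ 2 = 0 := by linear_combination e2
          rcases mul_eq_zero.mp this with h' | h'
          · exact absurd h' hd3Q
          · exact pow_eq_zero_iff (two_ne_zero) |>.mp h'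
        exact hne ⟨ht, h1', h2', hu3⟩
      · exact hOdd (2 * c ^ 2) t (fun hd =>
          (hp.out.prime.dvd_mul.mp hd).elim hp2'
            (fun hx => hpc (hp.out.prime.dvd_of_dvd_pow hx)))
      · push_cast
        linear_combination -e3
    -- Application 2: from e2, d₃ u₃² - d₁ u₁² = a² n t²
    have key2 : IsSquare ((d₃ : ZMod p) * (d₁ : ZMod p)) := by
      apply keyA hd3 hd1 (x := u₃) (y := u₁) (w := ((a ^ 2 : ℕ) : ℚ_[p]) * (n : ℚ_[p]) * t ^ 2)
      · rintro ⟨h3', h1'⟩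
        rw [h1', h3'] at e2
        have ht : t = 0 := by
          have : (a : ℚ_[p]) ^ 2 * (n : ℚ_[p]) * t ^ 2 = 0 := by linear_combination -e2
          rcases mul_eq_zero.mp this with h' | h'
          · exact absurd h' (mul_ne_zero (pow_ne_zero 2 ha0) hn0)
          · exact pow_eq_zero_iff (two_ne_zero) |>.mp h'
        rw [ht, h3'] at e1
        have hu2 : u₂ = 0 := by
          have : (d₂ : ℚ_[p]) * u₂ ^ 2 = 0 := by linear_combination e1
          rcases mul_eq_zero.mp this with h' | h'
          · exact absurd h' hd2Q
          · exact pow_eq_zero_iff (two_ne_zero) |>.mp h'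
        exact hne ⟨ht, h1', hu2, h3'⟩
      · exact hOdd (a ^ 2) t (fun hd => hpa (hp.out.prime.dvd_of_dvd_pow hd))
      · push_cast
        linear_combination e2
    -- now conclude via the quadratic character
    have hD1 : (d₁ : ZMod p) ≠ 0 := by rw [Ne, ZMod.intCast_zmod_eq_zero_iff_dvd]; exact hd1
    have hD2 : (d₂ : ZMod p) ≠ 0 := by rw [Ne, ZMod.intCast_zmod_eq_zero_iff_dvd]; exact hd2
    have hD3 : (d₃ : ZMod p) ≠ 0 := by rw [Ne, ZMod.intCast_zmod_eq_zero_iff_dvd]; exact hd3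
    have hM : (m : ZMod p) ≠ 0 := by rw [Ne, ZMod.intCast_zmod_eq_zero_iff_dvd]; exact hdm
    set χ := quadraticChar (ZMod p) with hχ
    have c21 : χ (d₂ : ZMod p) * χ (d₁ : ZMod p) = 1 := by
      rw [← map_mul]
      exact (quadraticChar_one_iff_isSquare (mul_ne_zero hD2 hD1)).mpr key1
    have c31 : χ (d₃ : ZMod p) * χ (d₁ : ZMod p) = 1 := by
      rw [← map_mul]
      exact (quadraticChar_one_iff_isSquare (mul_ne_zero hD3 hD1)).mpr key2
    have cM : χ (d₁ : ZMod p) * χ (d₂ : ZMod p) * χ (d₃ : ZMod p) = 1 := by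
      rw [← map_mul, ← map_mul]
      apply (quadraticChar_one_iff_isSquare ?_).mpr
      · refine ⟨(m : ZMod p), ?_⟩
        have : ((d₁ * d₂ * d₃ : ℤ) : ZMod p) = ((m ^ 2 : ℤ) : ZMod p) := by rw [hm]
        push_cast at this
        rw [this]; ring
      · exact mul_ne_zero (mul_ne_zero hD1 hD2) hD3
    have hχ3 : χ (d₃ : ZMod p) = 1 := by
      have hstep : (χ (d₂ : ZMod p) * χ (d₁ : ZMod p)) * χ (d₃ : ZMod p) = 1 := by
        linear_combination cM
      rw [c21, one_mul] at hstep
      exact hstep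
    have hχ1 : χ (d₁ : ZMod p) = 1 := by
      rw [hχ3, one_mul] at c31
      exact c31
    have hχ2 : χ (d₂ : ZMod p) = 1 := by
      rw [hχ1, mul_one] at c21
      exact c21
    exact ⟨(quadraticChar_one_iff_isSquare hD1).mp hχ1,
      (quadraticChar_one_iff_isSquare hD2).mp hχ2⟩
  · rintro ⟨hs1, hs2⟩
    obtain ⟨s, hs⟩ := myHensel hp2 hd1 hs1
    obtain ⟨r, hr⟩ := myHensel hp2 hd2 hs2
    have hs0 : s ≠ 0 := by
      intro h0; rw [h0] at hs; simp at hs; exact hd10 hs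
    have hr0 : r ≠ 0 := by
      intro h0; rw [h0] at hr; simp at hr; exact hd20 hr
    have hmcast : (d₁ : ℚ_[p]) * (d₂ : ℚ_[p]) * (d₃ : ℚ_[p]) = (m : ℚ_[p]) ^ 2 := by
      exact_mod_cast congrArg (fun z : ℤ => (z : ℚ_[p])) hm
    have hA : (d₁ : ℚ_[p]) * (s⁻¹) ^ 2 = 1 := by
      rw [hs]; field_simp
    have hB : (d₂ : ℚ_[p]) * (r⁻¹) ^ 2 = 1 := by
      rw [hr]; field_simp
    have hC : (d₃ : ℚ_[p]) * (s * r / m) ^ 2 = 1 := by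
      have hkey : (d₃ : ℚ_[p]) * (s ^ 2 * r ^ 2) = (m : ℚ_[p]) ^ 2 := by
        rw [← hs, ← hr]; linear_combination hmcast
      field_simp
      linear_combination hkey
    refine ⟨0, s⁻¹, r⁻¹, s * r / m, ?_, ?_, ?_, ?_⟩
    · rintro ⟨-, h1', -, -⟩
      exact (inv_ne_zero hs0) h1'
    · rw [hB, hC]; ring
    · rw [hC, hA]; ring
    · rw [hA, hB]; ring
end

section
/- Let n = p₁⋯p_k be a square-free positive integer with all p_i ≡ ±1 mod 8 and n ≡ 1 mod 8, and let A ∈ M_k(𝔽₂) be the matrix with entries A_{ij} equal to the additive Hilbert symbol [p_j, -n]_{p_i} (taking [p_i, -n]_{p_i} on the diagonal). Let D_{-1} = diag of the additive Legendre symbols [-1/p_i]. Then for any vector d = (s₁,…,s_k)ᵀ ∈ 𝔽₂^k corresponding to d = p₁^{s₁}⋯p_k^{s_k}, one has d ∈ Ker(A + D_{-1}) if and only if d + (-1/d)·𝟏 ∈ Ker(Aᵀ), where (-1/d) ∈ 𝔽₂ is the additive Jacobi symbol and 𝟏 is the all-ones vector. -/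
open Matrix

open Classical in
/-- Additive Legendre symbol: 0 if `a` is a quadratic residue mod the prime `p`
(Legendre symbol 1), 1 otherwise; junk value 0 if `p` is not prime. -/
noncomputable def addLeg (p : ℕ) (a : ℤ) : ZMod 2 :=
  if h : p.Prime then
    haveI : Fact p.Prime := ⟨h⟩
    if legendreSym p a = 1 then 0 else 1
  else 0

open Classical in
/-- Additive Hilbert symbol [u, v]_p ∈ 𝔽₂: 0 iff z² = ux² + vy² has a nontrivial
solution over ℚ_p; junk value 0 if `p` is not prime. -/
noncomputable def addHilb (p : ℕ) (u v : ℤ) : ZMod 2 :=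
  if h : p.Prime then
    haveI : Fact p.Prime := ⟨h⟩
    if ∃ x y z : ℚ_[p], ¬(x = 0 ∧ y = 0 ∧ z = 0) ∧
        z ^ 2 = (u : ℚ_[p]) * x ^ 2 + (v : ℚ_[p]) * y ^ 2 then 0 else 1
  else 0

/-!
Off the diagonal, `[p_j, -n]_{p_i}` is the Legendre symbol `(p_j/p_i)`, and on the diagonal
`[p_i, -n]_{p_i} = (m_i/p_i)` with `m_i = n/p_i`; both follow from the analysis of
`z² = u x² + p w y²` over `ℚ_p` for `p`-adic units `u, w` (Hensel's lemma and the parity of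
valuations). Multiplicativity of the Legendre symbol then makes every row of `A` sum to
`(m_i/p_i) + (m_i/p_i) = 0`, and quadratic reciprocity gives `Aᵀ = A + D₋₁ + b bᵀ` with
`b = ((-1/p_i))_i`. As `n ≡ 1 mod 4`, `b` has even weight, and these three facts yield
`Aᵀ (d + (bᵀd) 𝟏) = (A + D₋₁) d` over `𝔽₂`.
-/

theorem Matrix.transpose_mulVec_add_dotProduct_smul_one {ι R : Type*} [Fintype ι] [DecidableEq ι]
    [CommRing R] [CharP R 2] {A : Matrix ι ι R} {b : ι → R}
    (hA : Aᵀ = A + diagonal b + vecMulVec b b) (hA1 : A *ᵥ 1 = 0) (hb : ∑ i, b i = 0)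
    (d : ι → R) : Aᵀ *ᵥ (d + (d ⬝ᵥ b) • 1) = (A + diagonal b) *ᵥ d := by
  have hb1 : b ⬝ᵥ 1 = 0 := by simpa [dotProduct] using hb
  ext i
  simp only [hA, add_mulVec, mulVec_add, mulVec_smul, hA1, vecMulVec_mulVec, hb1, Pi.add_apply,
    Pi.smul_apply, mulVec_diagonal, Pi.one_apply, smul_eq_mul, MulOpposite.smul_eq_mul_unop,
    MulOpposite.unop_op, dotProduct_comm b d, Pi.zero_apply]
  linear_combination (b i * d ⬝ᵥ b) * CharTwo.two_eq_zero (R := R)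

-- `e ↦ (-1) ^ e` is the isomorphism `𝔽₂ ≅ {±1}` through which `addLeg` is compared with
-- `legendreSym`.
lemma neg_one_uzpow_injective :
    Function.Injective fun e : ZMod 2 => (((-1 : ℤˣ) ^ e : ℤˣ) : ℤ) := by
  decide

lemma neg_one_uzpow_natCast (m : ℕ) : (((-1 : ℤˣ) ^ (m : ZMod 2) : ℤˣ) : ℤ) = (-1) ^ m := by
  rw [uzpow_natCast]; push_cast; rfl

lemma neg_one_uzpow_sum {ι : Type*} (s : Finset ι) (e : ι → ZMod 2) :
    (((-1 : ℤˣ) ^ (∑ i ∈ s, e i) : ℤˣ) : ℤ) = ∏ i ∈ s, (((-1 : ℤˣ) ^ e i : ℤˣ) : ℤ) := by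
  induction s using Finset.cons_induction with
  | empty => simp
  | cons a s ha ih => rw [Finset.sum_cons, Finset.prod_cons, uzpow_add, Units.val_mul, ih]

section addLeg

variable {p : ℕ} [Fact p.Prime]

lemma neg_one_uzpow_addLeg {a : ℤ} (ha : (a : ZMod p) ≠ 0) :
    (((-1 : ℤˣ) ^ addLeg p a : ℤˣ) : ℤ) = legendreSym p a := by
  rw [addLeg, dif_pos Fact.out]
  split_ifs with h
  · simp [h]
  · simpa using ((legendreSym.eq_one_or_neg_one p ha).resolve_left h).symm

lemma addLeg_eq_iff {a : ℤ} (ha : (a : ZMod p) ≠ 0) {e : ZMod 2} :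
    addLeg p a = e ↔ legendreSym p a = (((-1 : ℤˣ) ^ e : ℤˣ) : ℤ) := by
  rw [← neg_one_uzpow_addLeg ha]
  exact neg_one_uzpow_injective.eq_iff.symm

lemma addLeg_prod {ι : Type*} {s : Finset ι} {f : ι → ℤ} (hf : ∀ j ∈ s, (f j : ZMod p) ≠ 0) :
    addLeg p (∏ j ∈ s, f j) = ∑ j ∈ s, addLeg p (f j) := by
  rw [addLeg_eq_iff (by push_cast; exact Finset.prod_ne_zero_iff.mpr hf), neg_one_uzpow_sum,
    Finset.prod_congr rfl fun j hj => neg_one_uzpow_addLeg (hf j hj)]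
  exact map_prod (legendreSym.hom p) f s

lemma addLeg_neg_one (hp : p ≠ 2) : addLeg p (-1) = ((p / 2 : ℕ) : ZMod 2) := by
  rw [addLeg_eq_iff (by simp), neg_one_uzpow_natCast, legendreSym.at_neg_one hp,
    ZMod.χ₄_eq_neg_one_pow ((Fact.out : p.Prime).mod_two_eq_one_iff_ne_two.mpr hp)]

lemma addLeg_quadratic_reciprocity {q : ℕ} [Fact q.Prime] (hp : p ≠ 2) (hq : q ≠ 2) (hpq : p ≠ q) :
    addLeg q p + addLeg p q = addLeg p (-1) * addLeg q (-1) := by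
  apply neg_one_uzpow_injective
  dsimp only
  rw [uzpow_add, Units.val_mul,
    neg_one_uzpow_addLeg (by exact_mod_cast ZMod.prime_ne_zero q p hpq.symm),
    neg_one_uzpow_addLeg (by exact_mod_cast ZMod.prime_ne_zero p q hpq),
    legendreSym.quadratic_reciprocity hp hq hpq, addLeg_neg_one hp, addLeg_neg_one hq,
    ← Nat.cast_mul, neg_one_uzpow_natCast]

end addLeg

lemma sum_addLeg_neg_one_eq_zero {ι : Type*} [Fintype ι] {p : ι → ℕ} (hp : ∀ i, (p i).Prime)
    (hp2 : ∀ i, p i ≠ 2) (h4 : (∏ i, p i) % 4 = 1) : ∑ i, addLeg (p i) (-1) = 0 := by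
  apply neg_one_uzpow_injective
  dsimp only
  rw [neg_one_uzpow_sum, uzpow_zero, Units.val_one]
  calc ∏ i, (((-1 : ℤˣ) ^ addLeg (p i) (-1) : ℤˣ) : ℤ) = ∏ i, ZMod.χ₄ (p i) :=
        Finset.prod_congr rfl fun i _ => by
          have := Fact.mk (hp i)
          rw [neg_one_uzpow_addLeg (by simp), legendreSym.at_neg_one (hp2 i)]
    _ = ZMod.χ₄ (∏ i, p i : ℕ) := by rw [Nat.cast_prod, map_prod]
    _ = 1 := ZMod.χ₄_nat_one_mod_four h4

def HilbertSolvable {K : Type*} [Field K] (a b : K) : Prop :=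
  ∃ x y z : K, ¬(x = 0 ∧ y = 0 ∧ z = 0) ∧ z ^ 2 = a * x ^ 2 + b * y ^ 2

namespace HilbertSolvable

variable {K : Type*} [Field K] {a b c : K}

theorem symm : HilbertSolvable a b → HilbertSolvable b a := fun ⟨x, y, z, hxyz, h⟩ =>
  ⟨y, x, z, by tauto, by rw [h]; ring⟩

theorem comm : HilbertSolvable a b ↔ HilbertSolvable b a := ⟨symm, symm⟩

theorem neg_mul_self_iff (ha : a ≠ 0) : HilbertSolvable a (-(a * c)) ↔ HilbertSolvable a c := by
  constructor
  · rintro ⟨x, y, z, hxyz, h⟩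
    refine ⟨z, a * y, a * x, ?_, by linear_combination (-a) * h⟩
    simp only [mul_eq_zero, ha, false_or]
    tauto
  · rintro ⟨x, y, z, hxyz, h⟩
    refine ⟨z, y, a * x, ?_, by linear_combination (-a) * h⟩
    simp only [mul_eq_zero, ha, false_or]
    tauto

end HilbertSolvable

section Padic

variable {p : ℕ} [Fact p.Prime]

lemma PadicInt.norm_lt_one_iff_toZMod_eq_zero (z : ℤ_[p]) : ‖z‖ < 1 ↔ toZMod z = 0 := by
  rw [← mem_nonunits, ← IsLocalRing.mem_maximalIdeal, ← ker_toZMod, RingHom.mem_ker]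

lemma Padic.norm_intCast_eq_one {u : ℤ} (hu : (u : ZMod p) ≠ 0) : ‖(u : ℚ_[p])‖ = 1 := by
  refine le_antisymm (norm_int_le_one u) (not_lt.mp fun h => hu ?_)
  rw [norm_intCast_lt_one_iff] at h
  exact (ZMod.intCast_zmod_eq_zero_iff_dvd u p).mpr h

lemma Padic.isSquare_intCast_of_isSquare_zmod (hp : p ≠ 2) {u : ℤ} (hu : (u : ZMod p) ≠ 0)
    (h : IsSquare (u : ZMod p)) : IsSquare (u : ℚ_[p]) := by
  obtain ⟨r, hr⟩ := h
  have hr0 : r ≠ 0 := by rintro rfl; simp_all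
  have h2 : (2 : ZMod p) ≠ 0 := by exact_mod_cast ZMod.prime_ne_zero p 2 hp
  let F : Polynomial ℤ := .X ^ 2 - .C u
  let a : ℤ_[p] := (r.val : ℤ_[p])
  have ha : PadicInt.toZMod a = r := by simp [a]
  have hFa : ‖F.aeval a‖ < 1 := by
    simp [F, PadicInt.norm_lt_one_iff_toZMod_eq_zero, ha, hr, sq]
  have hF'a : ‖F.derivative.aeval a‖ = 1 := by
    refine le_antisymm (PadicInt.norm_le_one _) (not_lt.mp ?_)
    have hF' : F.derivative.aeval a = 2 * a := by simp [F, map_ofNat]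
    rw [hF', PadicInt.norm_lt_one_iff_toZMod_eq_zero]
    simp [ha, h2, hr0, map_ofNat]
  obtain ⟨z, hz, -⟩ := hensels_lemma (F := F) (a := a) (by rwa [hF'a, one_pow])
  have hz' : z * z = (u : ℤ_[p]) := by simpa [F, sub_eq_zero, sq] using hz
  exact ⟨z, by exact_mod_cast congrArg ((↑) : ℤ_[p] → ℚ_[p]) hz'.symm⟩

lemma Padic.isSquare_zmod_of_norm_sq_sub_lt_one {t : ℚ_[p]} {u : ℤ} (h : ‖t ^ 2 - u‖ < 1) :
    IsSquare (u : ZMod p) := by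
  have ht : ‖t‖ ≤ 1 := by
    have : ‖t ^ 2‖ ≤ 1 := calc
      ‖t ^ 2‖ = ‖(t ^ 2 - u) + u‖ := by rw [sub_add_cancel]
      _ ≤ max ‖t ^ 2 - u‖ ‖(u : ℚ_[p])‖ := nonarchimedean _ _
      _ ≤ 1 := max_le h.le (norm_int_le_one u)
    rwa [norm_pow, pow_le_one_iff_of_nonneg (norm_nonneg _) two_ne_zero] at this
  let s : ℤ_[p] := ⟨t, ht⟩
  have hs : ‖s ^ 2 - (u : ℤ_[p])‖ < 1 := by
    rw [PadicInt.norm_def]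
    push_cast
    exact h
  rw [PadicInt.norm_lt_one_iff_toZMod_eq_zero, map_sub, map_pow, map_intCast, sub_eq_zero] at hs
  exact ⟨PadicInt.toZMod s, by rw [← hs, sq]⟩

lemma Padic.norm_sq_ne_inv_mul_norm_sq (t : ℚ_[p]) {s : ℚ_[p]} (hs : s ≠ 0) :
    ‖t‖ ^ 2 ≠ (p : ℝ)⁻¹ * ‖s‖ ^ 2 := by
  have hp1 : (1 : ℝ) < p := by exact_mod_cast (Fact.out : p.Prime).one_lt
  by_cases ht : t = 0
  · simp [ht, hs, (Fact.out : p.Prime).ne_zero]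
  intro h
  have key : (p : ℝ) ^ (-2 * t.valuation) = (p : ℝ) ^ (-1 - 2 * s.valuation) := calc
    (p : ℝ) ^ (-2 * t.valuation) = ‖t‖ ^ 2 := by
      rw [norm_eq_zpow_neg_valuation ht, ← zpow_natCast, ← _root_.zpow_mul]
      ring_nf
    _ = (p : ℝ)⁻¹ * ‖s‖ ^ 2 := h
    _ = (p : ℝ) ^ (-1 - 2 * s.valuation) := by
      rw [norm_eq_zpow_neg_valuation hs, ← zpow_natCast, ← _root_.zpow_mul, ← _root_.zpow_neg_one,
        ← zpow_add₀ (by positivity)]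
      ring_nf
  have := zpow_right_injective₀ (by positivity) hp1.ne' key
  omega

theorem Padic.hilbertSolvable_intCast_iff (hp : p ≠ 2) {u w : ℤ} (hu : (u : ZMod p) ≠ 0)
    (hw : (w : ZMod p) ≠ 0) :
    HilbertSolvable (u : ℚ_[p]) (p * w) ↔ IsSquare (u : ZMod p) := by
  refine ⟨fun ⟨x, y, z, hxyz, h⟩ => ?_, fun h => ?_⟩
  swap
  · obtain ⟨r, hr⟩ := isSquare_intCast_of_isSquare_zmod hp hu h
    exact ⟨1, 0, r, by simp, by rw [hr]; ring⟩
  have hnu : ‖(u : ℚ_[p])‖ = 1 := norm_intCast_eq_one hu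
  have hnq (s : ℚ_[p]) : ‖(p : ℚ_[p]) * w * s ^ 2‖ = (p : ℝ)⁻¹ * ‖s‖ ^ 2 := by
    simp [norm_p, norm_intCast_eq_one hw]
  by_cases hx : x = 0
  · have hy : y ≠ 0 := by
      rintro rfl
      simp_all
    refine absurd ?_ (norm_sq_ne_inv_mul_norm_sq z hy)
    rw [← hnq, ← norm_pow, h, hx]
    ring_nf
  -- With `t = z/x`, `s = y/x`: `t² = u + p w s²`. The norm of `p w s²` is an odd power of `p`;
  -- if it is `< 1` then `t² ≡ u`, otherwise it dominates `‖u‖ = 1` and would equal `‖t‖²`.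
  set t := z / x
  set s := y / x
  have hts : t ^ 2 = u + p * w * s ^ 2 := by
    simp only [t, s]
    field_simp
    linear_combination h
  rcases lt_or_ge ‖(p : ℚ_[p]) * w * s ^ 2‖ 1 with hlt | hge
  · exact isSquare_zmod_of_norm_sq_sub_lt_one (by rwa [hts, add_sub_cancel_left])
  have hs : s ≠ 0 := by
    rintro hs
    norm_num [hs] at hge
  have hne : ‖(u : ℚ_[p])‖ ≠ ‖(p : ℚ_[p]) * w * s ^ 2‖ := by
    rw [hnu, hnq]
    exact fun h1 => norm_sq_ne_inv_mul_norm_sq 1 hs (by simpa using h1)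
  refine absurd ?_ (norm_sq_ne_inv_mul_norm_sq t hs)
  rw [← hnq, ← norm_pow, hts, add_eq_max_of_ne hne, max_eq_right (hnu ▸ hge)]

end Padic

section addHilb

variable {p : ℕ} [Fact p.Prime]

lemma addHilb_eq_addLeg_of_iff {u v a : ℤ} (ha : (a : ZMod p) ≠ 0)
    (h : HilbertSolvable (u : ℚ_[p]) v ↔ IsSquare (a : ZMod p)) :
    addHilb p u v = addLeg p a := by
  rw [addHilb, addLeg, dif_pos Fact.out, dif_pos Fact.out]
  split_ifs with hs hl hl
  · rfl
  · exact absurd ((legendreSym.eq_one_iff p ha).mpr (h.mp hs)) hl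
  · exact absurd (h.mpr ((legendreSym.eq_one_iff p ha).mp hl)) hs
  · rfl

lemma addHilb_prime_mul (hp : p ≠ 2) {u w : ℤ} (hu : (u : ZMod p) ≠ 0)
    (hw : (w : ZMod p) ≠ 0) : addHilb p u (p * w) = addLeg p u :=
  addHilb_eq_addLeg_of_iff hu (by push_cast; exact Padic.hilbertSolvable_intCast_iff hp hu hw)

lemma addHilb_prime_neg_prime_mul (hp : p ≠ 2) {w : ℤ} (hw : (w : ZMod p) ≠ 0) :
    addHilb p p (-(p * w)) = addLeg p w :=
  addHilb_eq_addLeg_of_iff hw <| by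
    push_cast
    rw [HilbertSolvable.neg_mul_self_iff (by exact_mod_cast (Fact.out : p.Prime).ne_zero),
      HilbertSolvable.comm]
    simpa using Padic.hilbertSolvable_intCast_iff hp hw (w := 1) (by simp)

end addHilb

section hilbertMatrix

open Finset

variable {ι : Type*} [Fintype ι] [DecidableEq ι] {p : ι → ℕ}

noncomputable def hilbertMatrix (p : ι → ℕ) : Matrix ι ι (ZMod 2) :=
  of fun i j => addHilb (p i) (p j) (-∏ l, (p l : ℤ))

lemma intCast_prod_erase_ne_zero (hp : ∀ i, (p i).Prime) (hinj : Function.Injective p) (i : ι) :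
    ((∏ j ∈ univ.erase i, (p j : ℤ) : ℤ) : ZMod (p i)) ≠ 0 := by
  have := Fact.mk (hp i)
  push_cast
  refine prod_ne_zero_iff.mpr fun j hj => ?_
  have := Fact.mk (hp j)
  exact ZMod.prime_ne_zero (p i) (p j) (hinj.ne (ne_of_mem_erase hj).symm)

lemma neg_prod_eq_neg_mul_prod_erase (i : ι) :
    -∏ l, (p l : ℤ) = -((p i : ℤ) * ∏ j ∈ univ.erase i, (p j : ℤ)) := by
  rw [mul_prod_erase univ (fun l => (p l : ℤ)) (mem_univ i)]

lemma hilbertMatrix_apply_of_ne (hp : ∀ i, (p i).Prime) (hp2 : ∀ i, p i ≠ 2)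
    (hinj : Function.Injective p) {i j : ι} (hij : i ≠ j) :
    hilbertMatrix p i j = addLeg (p i) (p j) := by
  have := Fact.mk (hp i)
  have := Fact.mk (hp j)
  rw [hilbertMatrix, of_apply, neg_prod_eq_neg_mul_prod_erase i, ← mul_neg]
  refine addHilb_prime_mul (hp2 i)
    (by exact_mod_cast ZMod.prime_ne_zero (p i) (p j) (hinj.ne hij)) ?_
  push_cast
  exact neg_ne_zero.mpr (by exact_mod_cast intCast_prod_erase_ne_zero hp hinj i)

lemma hilbertMatrix_apply_self (hp : ∀ i, (p i).Prime) (hp2 : ∀ i, p i ≠ 2)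
    (hinj : Function.Injective p) (i : ι) :
    hilbertMatrix p i i = addLeg (p i) (∏ j ∈ univ.erase i, (p j : ℤ)) := by
  have := Fact.mk (hp i)
  rw [hilbertMatrix, of_apply, neg_prod_eq_neg_mul_prod_erase i]
  exact addHilb_prime_neg_prime_mul (hp2 i) (intCast_prod_erase_ne_zero hp hinj i)

lemma hilbertMatrix_mulVec_one (hp : ∀ i, (p i).Prime) (hp2 : ∀ i, p i ≠ 2)
    (hinj : Function.Injective p) : hilbertMatrix p *ᵥ 1 = 0 := by
  ext i
  have := Fact.mk (hp i)
  simp only [mulVec, dotProduct, Pi.one_apply, mul_one, Pi.zero_apply]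
  rw [← add_sum_erase _ _ (mem_univ i), hilbertMatrix_apply_self hp hp2 hinj,
    addLeg_prod fun j hj => ?_,
    sum_congr rfl fun j hj => hilbertMatrix_apply_of_ne hp hp2 hinj (ne_of_mem_erase hj).symm,
    CharTwo.add_self_eq_zero]
  have := Fact.mk (hp j)
  exact_mod_cast ZMod.prime_ne_zero (p i) (p j) (hinj.ne (ne_of_mem_erase hj).symm)

lemma hilbertMatrix_transpose (hp : ∀ i, (p i).Prime) (hp2 : ∀ i, p i ≠ 2)
    (hinj : Function.Injective p) :
    (hilbertMatrix p)ᵀ = hilbertMatrix p + diagonal (fun i => addLeg (p i) (-1)) +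
      vecMulVec (fun i => addLeg (p i) (-1)) (fun i => addLeg (p i) (-1)) := by
  ext i j
  simp only [transpose_apply, Matrix.add_apply, diagonal_apply, vecMulVec_apply]
  rcases eq_or_ne i j with rfl | hij
  · rw [if_pos rfl]
    generalize hilbertMatrix p i i = x
    generalize addLeg (p i) (-1) = y
    revert x y
    decide
  · have := Fact.mk (hp i)
    have := Fact.mk (hp j)
    rw [if_neg hij, hilbertMatrix_apply_of_ne hp hp2 hinj hij.symm,
      hilbertMatrix_apply_of_ne hp hp2 hinj hij,
      ← addLeg_quadratic_reciprocity (hp2 i) (hp2 j) (hinj.ne hij)]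
    generalize addLeg (p j) (p i) = x
    generalize addLeg (p i) (p j) = y
    revert x y
    decide

end hilbertMatrix

/-- with all p_i ≡ ±1 mod 8 and n = p₁⋯p_k ≡ 1 mod 8,
d ∈ Ker(A + D₋₁) iff d + (-1/d)·𝟏 ∈ Ker(Aᵀ). -/
theorem stmt8 (k : ℕ) (p : Fin k → ℕ) (hp : ∀ i, (p i).Prime)
    (hinj : Function.Injective p)
    (h8 : ∀ i, p i % 8 = 1 ∨ p i % 8 = 7)
    (n : ℕ) (hn : n = ∏ i, p i) (hn8 : n % 8 = 1)
    (A : Matrix (Fin k) (Fin k) (ZMod 2))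
    (hA : ∀ i j, A i j = addHilb (p i) (p j) (-(n : ℤ)))
    (d : Fin k → ZMod 2) :
    (A + Matrix.diagonal fun i => addLeg (p i) (-1)) *ᵥ d = 0 ↔
      Aᵀ *ᵥ (d + (∑ i, d i * addLeg (p i) (-1)) • fun _ => (1 : ZMod 2)) = 0 := by
  have hp2 : ∀ i, p i ≠ 2 := fun i h => by have := h8 i; omega
  have hA' : A = hilbertMatrix p := by
    ext i j
    rw [hA, hn]
    push_cast
    rfl
  subst hA'
  have h4 : (∏ i, p i) % 4 = 1 := by rw [← hn]; omega
  exact (congrArg (· = 0) (transpose_mulVec_add_dotProduct_smul_one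
    (hilbertMatrix_transpose hp hp2 hinj) (hilbertMatrix_mulVec_one hp hp2 hinj)
    (sum_addLeg_neg_one_eq_zero hp hp2 h4) d)).to_iff.symm
end

section
/- Let k ≥ 1 and let A ∈ M_k(𝔽₂) be a symmetric matrix with A𝟏 = 0 and rank A = k-2, and let b ∈ 𝔽₂^k with 𝟏ᵀb = 0 and b ∉ Im A. Write Ker A = {0, 𝟏, d, d+𝟏}. Let D be a diagonal matrix with diagonal vector b (i.e., D𝟏 = b). Then the kernel of the 2k×2k block matrix M = [[A+D, D],[D, A+D]] equals {(u,u)ᵀ : u ∈ Ker A} and has exactly 4 elements. -/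
/-!
Over 𝔽₂, writing `v = (x, y)` and `w = x + y`, the equation `M v = 0` says
`A x = A y = D w`, so `A w = 0` and `D w = b * w` lies in `Im A`. As `A` is symmetric,
`Im A` is the orthogonal complement of `Ker A`. Applied to `b ∉ Im A` this gives `b ⬝ d ≠ 0`
(as `b ⬝ 𝟏 = 0`), which also makes `0, 𝟏, d, d + 𝟏` distinct; applied to `b * w ∈ Im A`
and `𝟏 ∈ Ker A` it gives `b ⬝ w = 0`. Of the four elements of `Ker A` only `w = 0`
survives, so `v = (x, x)` with `A x = 0`.
-/

open Matrix

namespace Matrix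

variable {K m n : Type*} [Field K] [Fintype m] [Fintype n]

theorem exists_mulVec_eq_iff_forall_vecMul_eq_zero (A : Matrix m n K) (b : m → K) :
    (∃ x, A *ᵥ x = b) ↔ ∀ c, c ᵥ* A = 0 → c ⬝ᵥ b = 0 := by
  classical
  refine ⟨fun ⟨x, hx⟩ c hc => by rw [← hx, dotProduct_mulVec, hc, zero_dotProduct], ?_⟩
  contrapose!
  intro hb
  have hb' : b ∉ LinearMap.range A.mulVecLin := by
    rintro ⟨x, hx⟩
    exact hb x hx
  obtain ⟨f, hfb, hrange⟩ := Submodule.exists_le_ker_of_notMem hb'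
  set c := (dotProductEquiv K m).symm f
  have hf : ∀ v, c ⬝ᵥ v = f v := fun v => by
    rw [← dotProductEquiv_apply_apply, LinearEquiv.apply_symm_apply]
  refine ⟨c, funext fun j => ?_, by rwa [hf]⟩
  rw [Pi.zero_apply, ← dotProduct_single_one (c ᵥ* A) j, ← dotProduct_mulVec, hf]
  exact hrange ⟨_, rfl⟩

theorem IsSymm.exists_mulVec_eq_iff {A : Matrix n n K} (hA : A.IsSymm) (b : n → K) :
    (∃ x, A *ᵥ x = b) ↔ ∀ c, A *ᵥ c = 0 → c ⬝ᵥ b = 0 := by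
  have hvecMul : ∀ c, c ᵥ* A = A *ᵥ c := fun c => by rw [← vecMul_transpose, hA.eq]
  simp only [exists_mulVec_eq_iff_forall_vecMul_eq_zero, hvecMul]

theorem fromBlocks_add_mulVec_sumElim {R l o : Type*} [NonUnitalNonAssocSemiring R] [Fintype l]
    (A B : Matrix o l R) (x y : l → R) :
    fromBlocks (A + B) B B (A + B) *ᵥ Sum.elim x y =
      Sum.elim (A *ᵥ x + B *ᵥ (x + y)) (A *ᵥ y + B *ᵥ (x + y)) := by
  simp only [fromBlocks_mulVec, Sum.elim_comp_inl, Sum.elim_comp_inr, add_mulVec, mulVec_add]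
  congr 1 <;> abel

theorem IsSymm.dotProduct_eq_zero_of_exists_mulVec_eq_mul {A : Matrix n n K} (hA : A.IsSymm)
    (hA1 : A *ᵥ 1 = 0) {b w : n → K} (hbw : ∃ x, A *ᵥ x = b * w) : w ⬝ᵥ b = 0 := by
  have := (hA.exists_mulVec_eq_iff _).mp hbw 1 hA1
  simpa only [dotProduct, Pi.mul_apply, Pi.one_apply, mul_one, mul_comm] using this

end Matrix

section BlockKernel

variable {n : Type*} [Fintype n] {A : Matrix n n (ZMod 2)} {b d : n → ZMod 2}

theorem dotProduct_ne_zero_of_forall_mulVec_eq_zero_iff (hA : A.IsSymm)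
    (hker : ∀ x, A *ᵥ x = 0 ↔ x = 0 ∨ x = 1 ∨ x = d ∨ x = d + 1)
    (hb1 : ∑ i, b i = 0) (hbim : ¬ ∃ x, A *ᵥ x = b) : d ⬝ᵥ b ≠ 0 := by
  rw [hA.exists_mulVec_eq_iff] at hbim
  push Not at hbim
  obtain ⟨c, hc, hcb⟩ := hbim
  rw [← one_dotProduct] at hb1
  rcases (hker c).mp hc with rfl | rfl | rfl | rfl
  · exact absurd (zero_dotProduct b) hcb
  · exact absurd hb1 hcb
  · exact hcb
  · rwa [add_dotProduct, hb1, add_zero] at hcb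

theorem ncard_setOf_mulVec_eq_zero_eq_four (hA : A.IsSymm)
    (hker : ∀ x, A *ᵥ x = 0 ↔ x = 0 ∨ x = 1 ∨ x = d ∨ x = d + 1)
    (hb1 : ∑ i, b i = 0) (hbim : ¬ ∃ x, A *ᵥ x = b) : {x | A *ᵥ x = 0}.ncard = 4 := by
  have hdb := dotProduct_ne_zero_of_forall_mulVec_eq_zero_iff hA hker hb1 hbim
  have h1 : (1 : n → ZMod 2) ≠ 0 := fun h =>
    hdb (by rw [← mul_one d, h, mul_zero, zero_dotProduct])
  have hd0 : d ≠ 0 := fun h => hdb (by rw [h, zero_dotProduct])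
  have hd1 : d ≠ 1 := fun h => hdb (by rw [h, one_dotProduct, hb1])
  rw [Set.ncard_eq_four]
  refine ⟨0, 1, d, d + 1, h1.symm, hd0.symm, fun h => hd1 ?_, hd1.symm,
    fun h => hd0 (right_eq_add.mp h), fun h => h1 (left_eq_add.mp h), Set.ext hker⟩
  simpa only [ZModModule.neg_eq_self] using eq_neg_of_add_eq_zero_left h.symm

theorem eq_zero_of_mulVec_eq_zero_of_exists_mulVec_eq_mul (hA : A.IsSymm)
    (hA1 : A *ᵥ 1 = 0) (hker : ∀ x, A *ᵥ x = 0 ↔ x = 0 ∨ x = 1 ∨ x = d ∨ x = d + 1)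
    (hb1 : ∑ i, b i = 0) (hbim : ¬ ∃ x, A *ᵥ x = b) {w : n → ZMod 2} (hw : A *ᵥ w = 0)
    (hbw : ∃ x, A *ᵥ x = b * w) : w = 0 := by
  have hdb := dotProduct_ne_zero_of_forall_mulVec_eq_zero_iff hA hker hb1 hbim
  have hwb := hA.dotProduct_eq_zero_of_exists_mulVec_eq_mul hA1 hbw
  rw [← one_dotProduct] at hb1
  rcases (hker w).mp hw with rfl | rfl | rfl | rfl
  · rfl
  · exact absurd (by simpa only [mul_one] using hbw) hbim
  · exact absurd hwb hdb
  · rw [add_dotProduct, hb1, add_zero] at hwb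
    exact absurd hwb hdb

theorem fromBlocks_mulVec_eq_zero_iff [DecidableEq n] (hA : A.IsSymm) (hA1 : A *ᵥ 1 = 0)
    (hker : ∀ x, A *ᵥ x = 0 ↔ x = 0 ∨ x = 1 ∨ x = d ∨ x = d + 1)
    (hb1 : ∑ i, b i = 0) (hbim : ¬ ∃ x, A *ᵥ x = b) (v : n ⊕ n → ZMod 2) :
    fromBlocks (A + diagonal b) (diagonal b) (diagonal b) (A + diagonal b) *ᵥ v = 0 ↔
      ∃ u, A *ᵥ u = 0 ∧ v = Sum.elim u u := by
  obtain ⟨x, y, rfl⟩ : ∃ x y, v = Sum.elim x y := ⟨_, _, (Sum.elim_comp_inl_inr v).symm⟩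
  have hdiag : ∀ w, diagonal b *ᵥ w = b * w := fun w => funext (mulVec_diagonal b w)
  simp only [fromBlocks_add_mulVec_sumElim, ← Sum.elim_zero_zero, Sum.elim_eq_iff,
    add_eq_zero_iff_eq_neg, ZModModule.neg_eq_self, hdiag]
  constructor
  · rintro ⟨hx, hy⟩
    have hxy : x + y = 0 := eq_zero_of_mulVec_eq_zero_of_exists_mulVec_eq_mul hA hA1 hker hb1 hbim
      (by rw [mulVec_add, hx, hy, ZModModule.add_self]) ⟨x, hx⟩
    obtain rfl : x = y := by
      simpa only [ZModModule.neg_eq_self] using eq_neg_of_add_eq_zero_left hxy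
    exact ⟨x, by rw [hx, hxy, mul_zero], rfl, rfl⟩
  · rintro ⟨u, hu, rfl, rfl⟩
    simp only [hu, ZModModule.add_self, mul_zero, and_self]

end BlockKernel

theorem stmt10_general (k : ℕ) (A : Matrix (Fin k) (Fin k) (ZMod 2))
    (hsymm : A.IsSymm) (hA1 : A *ᵥ (fun _ => 1) = 0)
    (b : Fin k → ZMod 2) (hb1 : ∑ i, b i = 0) (hbim : ¬ ∃ x, A *ᵥ x = b)
    (d : Fin k → ZMod 2)
    (hker : ∀ x, A *ᵥ x = 0 ↔ x = 0 ∨ x = (fun _ => 1) ∨ x = d ∨ x = d + fun _ => 1) :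
    (∀ v : Fin k ⊕ Fin k → ZMod 2,
      (Matrix.fromBlocks (A + Matrix.diagonal b) (Matrix.diagonal b)
        (Matrix.diagonal b) (A + Matrix.diagonal b)) *ᵥ v = 0 ↔
      ∃ u, A *ᵥ u = 0 ∧ v = Sum.elim u u) ∧
    Set.ncard {v : Fin k ⊕ Fin k → ZMod 2 |
      (Matrix.fromBlocks (A + Matrix.diagonal b) (Matrix.diagonal b)
        (Matrix.diagonal b) (A + Matrix.diagonal b)) *ᵥ v = 0} = 4 := by
  have hkerM := fromBlocks_mulVec_eq_zero_iff hsymm hA1 hker hb1 hbim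
  refine ⟨hkerM, ?_⟩
  have hM : {v | fromBlocks (A + diagonal b) (diagonal b) (diagonal b) (A + diagonal b) *ᵥ v = 0}
      = (fun u => Sum.elim u u) '' {u | A *ᵥ u = 0} := by
    ext v
    simp only [Set.mem_ofPred_eq, hkerM, Set.mem_image, eq_comm]
  rw [hM, Set.ncard_image_of_injective _ fun _ _ h => (Sum.elim_eq_iff.mp h).1,
    ncard_setOf_mulVec_eq_zero_eq_four hsymm hker hb1 hbim]

/-- for symmetric A over 𝔽₂ with A𝟏 = 0, rank k-2,
Ker A = {0, 𝟏, d, d+𝟏}, and b ∉ Im A with 𝟏ᵀb = 0, the kernel of the block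
matrix [[A+D, D],[D, A+D]] (D = diag b) is {(u,u) : u ∈ Ker A}, of size 4. -/
theorem stmt10 (k : ℕ) (hk : 1 ≤ k) (A : Matrix (Fin k) (Fin k) (ZMod 2))
    (hsymm : A.IsSymm) (hA1 : A *ᵥ (fun _ => 1) = 0) (hrank : A.rank = k - 2)
    (b : Fin k → ZMod 2) (hb1 : ∑ i, b i = 0) (hbim : ¬ ∃ x, A *ᵥ x = b)
    (d : Fin k → ZMod 2)
    (hker : ∀ x, A *ᵥ x = 0 ↔ x = 0 ∨ x = (fun _ => 1) ∨ x = d ∨ x = d + fun _ => 1) :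
    (∀ v : Fin k ⊕ Fin k → ZMod 2,
      (Matrix.fromBlocks (A + Matrix.diagonal b) (Matrix.diagonal b)
        (Matrix.diagonal b) (A + Matrix.diagonal b)) *ᵥ v = 0 ↔
      ∃ u, A *ᵥ u = 0 ∧ v = Sum.elim u u) ∧
    Set.ncard {v : Fin k ⊕ Fin k → ZMod 2 |
      (Matrix.fromBlocks (A + Matrix.diagonal b) (Matrix.diagonal b)
        (Matrix.diagonal b) (A + Matrix.diagonal b)) *ᵥ v = 0} = 4 :=
  stmt10_general k A hsymm hA1 b hb1 hbim d hker
end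

section
/- Let k ≥ 1 and let A ∈ M_k(𝔽₂) be a symmetric matrix with A𝟏 = 0 and rank A = k-1, and let b ∈ 𝔽₂^k with 𝟏ᵀb = 0. Let D be the diagonal matrix with diagonal b. Then b ∈ Im A, and the kernel of the block matrix M = [[A+D, D],[D, A+D]] has exactly 4 elements, namely (0,0), (𝟏,𝟏), (d, d+𝟏), (d+𝟏, d) where Ad = b. -/
/-!
Since `A` has rank `k - 1` and kills `𝟏`, its kernel is `{0, 𝟏}`; since `A` is symmetric, its
image lies in the hyperplane `𝟏ᵀx = 0`, and equals it by counting dimensions, so `b = A d`.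
In characteristic two the two block rows of `M (x, y) = 0` add up to `A (x + y) = 0`, leaving
`A x = D (x + y)`. Hence either `y = x` and `A x = 0`, or `y = x + 𝟏` and `A x = D 𝟏 = b`,
which gives the four kernel vectors.
-/

open Matrix

namespace Matrix

section Field

variable {n K : Type*} [Fintype n] [Field K] {A : Matrix n n K}

theorem ker_mulVecLin_eq_span_singleton {v : n → K} (hv : v ≠ 0) (hAv : A *ᵥ v = 0)
    (hrank : A.rank + 1 = Fintype.card n) : LinearMap.ker A.mulVecLin = K ∙ v := by
  refine (Submodule.eq_of_le_of_finrank_eq ((Submodule.span_singleton_le_iff_mem _ _).mpr hAv)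
    ?_).symm
  have := LinearMap.finrank_range_add_finrank_ker A.mulVecLin
  rw [Module.finrank_fintype_fun_eq_card] at this
  change A.rank + _ = _ at this
  rw [finrank_span_singleton hv]
  omega

theorem mem_range_mulVecLin_iff_dotProduct_eq_zero {w : n → K} (hw : w ≠ 0)
    (hwA : w ᵥ* A = 0) (hrank : A.rank + 1 = Fintype.card n) {b : n → K} :
    b ∈ LinearMap.range A.mulVecLin ↔ w ⬝ᵥ b = 0 := by
  classical
  let f := dotProductEquiv K n w
  have hle : LinearMap.range A.mulVecLin ≤ LinearMap.ker f := by
    rintro _ ⟨x, rfl⟩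
    simp [f, dotProduct_mulVec, hwA]
  have hker := Module.Dual.finrank_ker_add_one_of_ne_zero (f := f)
    ((LinearEquiv.map_ne_zero_iff _).mpr hw)
  rw [Module.finrank_fintype_fun_eq_card, ← hrank, add_left_inj] at hker
  rw [Submodule.eq_of_le_of_finrank_eq hle hker.symm]
  rfl

end Field

theorem fromBlocks_add_mulVec_eq_zero_iff {m R : Type*} [Fintype m] [CommRing R] [CharP R 2]
    (A D : Matrix m m R) (x y : m → R) :
    fromBlocks (A + D) D D (A + D) *ᵥ (x ⊕ᵥ y) = 0 ↔
      A *ᵥ (x + y) = 0 ∧ A *ᵥ x = D *ᵥ (x + y) := by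
  have h2 : (2 : m → R) = 0 := funext fun _ => CharTwo.two_eq_zero
  rw [fromBlocks_mulVec, Sum.elim_comp_inl, Sum.elim_comp_inr, ← Sum.elim_zero_zero,
    Sum.elim_eq_iff]
  simp only [add_mulVec, mulVec_add]
  constructor
  · rintro ⟨h₁, h₂⟩
    constructor
    · linear_combination h₁ + h₂ - (D *ᵥ x + D *ᵥ y) * h2
    · linear_combination h₁ - (D *ᵥ x + D *ᵥ y) * h2
  · rintro ⟨h₁, h₂⟩
    constructor
    · linear_combination h₂ + (D *ᵥ x + D *ᵥ y) * h2
    · linear_combination h₁ - h₂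

end Matrix

namespace ZModModule

variable {M : Type*} [AddCommGroup M] [Module (ZMod 2) M]

theorem add_eq_iff_eq_add {x y z : M} : x + y = z ↔ y = x + z := by
  constructor <;> rintro rfl <;> rw [← add_assoc, add_self, zero_add]

theorem mem_span_singleton_iff_eq_zero_or_eq {x v : M} :
    x ∈ (ZMod 2) ∙ v ↔ x = 0 ∨ x = v := by
  refine ⟨fun h => ?_, ?_⟩
  · obtain ⟨a, rfl⟩ := Submodule.mem_span_singleton.mp h
    rcases (by decide : ∀ a : ZMod 2, a = 0 ∨ a = 1) a with rfl | rfl <;> simp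
  · rintro (rfl | rfl)
    exacts [Submodule.zero_mem _, Submodule.mem_span_singleton_self x]

end ZModModule

open ZModModule in
theorem Matrix.fromBlocks_add_diagonal_mulVec_eq_zero_iff {m : Type*} [Fintype m]
    [DecidableEq m] {A : Matrix m m (ZMod 2)} (hker : LinearMap.ker A.mulVecLin = (ZMod 2) ∙ 1)
    {b d : m → ZMod 2} (hd : A *ᵥ d = b) (v : m ⊕ m → ZMod 2) :
    fromBlocks (A + diagonal b) (diagonal b) (diagonal b) (A + diagonal b) *ᵥ v = 0 ↔
      v = 0 ∨ v = (1 : m → ZMod 2) ⊕ᵥ 1 ∨ v = d ⊕ᵥ (d + 1) ∨ v = (d + 1) ⊕ᵥ d := by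
  have hA (z : m → ZMod 2) : A *ᵥ z = 0 ↔ z = 0 ∨ z = 1 := by
    rw [← mem_span_singleton_iff_eq_zero_or_eq, ← hker]; rfl
  have hA1 : A *ᵥ 1 = 0 := (hA 1).mpr (Or.inr rfl)
  have hD : diagonal b *ᵥ 1 = b := by ext; simp [mulVec_diagonal]
  have hd1 : d + (d + 1) = 1 := add_eq_iff_eq_add.mpr rfl
  obtain ⟨x, y, rfl⟩ : ∃ x y, v = x ⊕ᵥ y := ⟨v ∘ Sum.inl, v ∘ Sum.inr, by simp⟩
  rw [fromBlocks_add_mulVec_eq_zero_iff, ← Sum.elim_zero_zero]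
  simp only [Sum.elim_eq_iff]
  constructor
  · rintro ⟨hxy, hx⟩
    rcases (hA _).mp hxy with hxy | hxy <;> rw [hxy] at hx <;>
      obtain rfl := add_eq_iff_eq_add.mp hxy
    · rw [mulVec_zero, hA] at hx
      rcases hx with rfl | rfl <;> simp
    · rw [hD, ← hd, ← sub_eq_zero, ← mulVec_sub, hA, sub_eq_add, add_eq_iff_eq_add,
        add_eq_iff_eq_add] at hx
      rcases hx with rfl | rfl
      · simp
      · simp [add_assoc, add_self]
  · rintro (⟨rfl, rfl⟩ | ⟨rfl, rfl⟩ | ⟨hx, hy⟩ | ⟨hx, hy⟩)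
    · simp
    · simp [add_self, hA1]
    · rw [hx, hy, hd1, hA1, hD]
      simp [hd]
    · rw [hx, hy, add_comm, hd1, hA1, hD, mulVec_add, hd, hA1, add_zero]
      simp

theorem List.ncard_setOf_mem {α : Type*} {l : List α} (hl : l.Nodup) :
    {x | x ∈ l}.ncard = l.length := by
  classical
  rw [← List.coe_toFinset, Set.ncard_coe_finset, List.toFinset_card_of_nodup hl]

/-- for symmetric A over 𝔽₂ with A𝟏 = 0, rank k-1, and
𝟏ᵀb = 0, one has b ∈ Im A, and the kernel of [[A+D, D],[D, A+D]] (D = diag b)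
has exactly the 4 elements (0,0), (𝟏,𝟏), (d,d+𝟏), (d+𝟏,d) where Ad = b. -/
theorem stmt11 (k : ℕ) (hk : 1 ≤ k) (A : Matrix (Fin k) (Fin k) (ZMod 2))
    (hsymm : A.IsSymm) (hA1 : A *ᵥ (fun _ => 1) = 0) (hrank : A.rank = k - 1)
    (b : Fin k → ZMod 2) (hb1 : ∑ i, b i = 0) :
    (∃ x, A *ᵥ x = b) ∧
    (∀ d : Fin k → ZMod 2, A *ᵥ d = b →
      ∀ v : Fin k ⊕ Fin k → ZMod 2,
        (Matrix.fromBlocks (A + Matrix.diagonal b) (Matrix.diagonal b)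
          (Matrix.diagonal b) (A + Matrix.diagonal b)) *ᵥ v = 0 ↔
        (v = 0 ∨ v = Sum.elim (fun _ => 1) (fun _ => 1) ∨
         v = Sum.elim d (d + fun _ => 1) ∨ v = Sum.elim (d + fun _ => 1) d)) ∧
    Set.ncard {v : Fin k ⊕ Fin k → ZMod 2 |
      (Matrix.fromBlocks (A + Matrix.diagonal b) (Matrix.diagonal b)
        (Matrix.diagonal b) (A + Matrix.diagonal b)) *ᵥ v = 0} = 4 := by
  let i₀ : Fin k := ⟨0, hk⟩
  have hone : (1 : Fin k → ZMod 2) ≠ 0 := Function.ne_iff.mpr ⟨i₀, one_ne_zero⟩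
  have hrank' : A.rank + 1 = Fintype.card (Fin k) := by rw [hrank, Fintype.card_fin]; omega
  have hker := ker_mulVecLin_eq_span_singleton hone hA1 hrank'
  have hvecMul : 1 ᵥ* A = 0 := by rw [← mulVec_transpose, hsymm]; exact hA1
  obtain ⟨d, hd⟩ : ∃ d, A *ᵥ d = b :=
    (mem_range_mulVecLin_iff_dotProduct_eq_zero hone hvecMul hrank').mpr
      (by rwa [one_dotProduct])
  have hkernel (d : Fin k → ZMod 2) (hd : A *ᵥ d = b) :=
    fromBlocks_add_diagonal_mulVec_eq_zero_iff hker hd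
  refine ⟨⟨d, hd⟩, hkernel, ?_⟩
  have hlist : ([0, (1 : Fin k → ZMod 2) ⊕ᵥ 1, d ⊕ᵥ (d + 1), (d + 1) ⊕ᵥ d]).Nodup := by
    refine List.Nodup.of_map (fun v => (v (Sum.inl i₀), v (Sum.inr i₀))) ?_
    simp only [List.map_cons, List.map_nil, Pi.zero_apply, Sum.elim_inl, Sum.elim_inr,
      Pi.add_apply, Pi.one_apply]
    generalize d i₀ = a
    decide +revert
  calc _ = {v | v ∈ [0, (1 : Fin k → ZMod 2) ⊕ᵥ 1, d ⊕ᵥ (d + 1), (d + 1) ⊕ᵥ d]}.ncard := by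
        congr; ext v; simp [hkernel d hd v]
    _ = 4 := List.ncard_setOf_mem hlist
end

section
/- Let d, d' be positive integers with d ≡ d' ≡ 5 mod 8, and let (α, β, γ) be a primitive triple of positive integers with dα² + d'β² = γ² and α even. Then α/2, β, and γ are all odd. -/
/-! Reducing modulo 2, an even `β` would make `γ` even as well, against primitivity; so `β` and
then `γ` are odd, and both squares are `1` mod 8. If `4 ∣ α` the equation read mod 8 becomes
`d' ≡ 1`, which contradicts `d' ≡ 5 (mod 8)`. -/

theorem Int.sq_emod_eight_eq_one_of_odd {x : ℤ} (hx : Odd x) : x ^ 2 % 8 = 1 := by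
  obtain ⟨k, rfl⟩ := hx
  obtain ⟨m, hm⟩ := Int.even_mul_succ_self k
  have hsq : (2 * k + 1) ^ 2 = 4 * (k * (k + 1)) + 1 := by ring
  rw [hsq, hm]
  omega

theorem Int.odd_div_two_of_even_of_not_four_dvd {a : ℤ} (ha : Even a) (h4 : ¬ 4 ∣ a) :
    Odd (a / 2) := by
  obtain ⟨k, rfl⟩ := ha
  rw [Int.odd_iff]
  omega

section DiagonalConic

variable {d d' α β γ : ℤ}

theorem odd_of_sq_eq_of_gcd_eq_one (hprim : Int.gcd (Int.gcd α β) γ = 1)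
    (heq : d * α ^ 2 + d' * β ^ 2 = γ ^ 2) (hα : Even α) : Odd β := by
  by_contra hβ
  rw [Int.not_odd_iff_even] at hβ
  have hγ : Even γ := by
    have hγsq : Even (γ ^ 2) := by
      rw [← heq]
      exact ((hα.pow_of_ne_zero two_ne_zero).mul_left d).add
        ((hβ.pow_of_ne_zero two_ne_zero).mul_left d')
    exact (Int.even_pow.mp hγsq).1
  have h2 : (2 : ℤ) ∣ (Int.gcd (Int.gcd α β) γ : ℤ) :=
    Int.dvd_coe_gcd (Int.dvd_coe_gcd hα.two_dvd hβ.two_dvd) hγ.two_dvd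
  rw [hprim] at h2
  norm_num at h2

theorem odd_of_sq_eq_of_odd (heq : d * α ^ 2 + d' * β ^ 2 = γ ^ 2) (hα : Even α)
    (hd' : Odd d') (hβ : Odd β) : Odd γ := by
  have hγsq : Odd (γ ^ 2) := by
    rw [← heq]
    exact ((hα.pow_of_ne_zero two_ne_zero).mul_left d).add_odd (hd'.mul hβ.pow)
  exact (Int.odd_pow' two_ne_zero).mp hγsq

theorem not_four_dvd_of_sq_eq (hd' : d' % 8 = 5) (heq : d * α ^ 2 + d' * β ^ 2 = γ ^ 2)
    (hβ : Odd β) (hγ : Odd γ) : ¬ 4 ∣ α := by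
  rintro ⟨t, rfl⟩
  have hβsq := Int.sq_emod_eight_eq_one_of_odd hβ
  have hγsq := Int.sq_emod_eight_eq_one_of_odd hγ
  have hmod : (d' * β ^ 2 + 8 * (2 * d * t ^ 2)) % 8 = γ ^ 2 % 8 := by
    rw [← heq]
    ring_nf
  rw [Int.add_mul_emod_self_left, Int.mul_emod, hβsq, hγsq, hd'] at hmod
  norm_num at hmod

end DiagonalConic

theorem stmt13_general (d d' α β γ : ℤ)
    (hd'8 : d' % 8 = 5)
    (hprim : Int.gcd (Int.gcd α β) γ = 1)
    (heq : d * α ^ 2 + d' * β ^ 2 = γ ^ 2) (hαeven : Even α) :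
    Odd (α / 2) ∧ Odd β ∧ Odd γ := by
  have hd'odd : Odd d' := by rw [Int.odd_iff]; omega
  have hβ : Odd β := odd_of_sq_eq_of_gcd_eq_one hprim heq hαeven
  have hγ : Odd γ := odd_of_sq_eq_of_odd heq hαeven hd'odd hβ
  exact ⟨Int.odd_div_two_of_even_of_not_four_dvd hαeven (not_four_dvd_of_sq_eq hd'8 heq hβ hγ),
    hβ, hγ⟩

/-- for a primitive positive solution of dα² + d'β² = γ² with
d ≡ d' ≡ 5 mod 8 and α even, the integers α/2, β, γ are all odd. -/
theorem stmt13 (d d' α β γ : ℤ) (hd : 0 < d) (hd' : 0 < d')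
    (hα : 0 < α) (hβ : 0 < β) (hγ : 0 < γ)
    (hd8 : d % 8 = 5) (hd'8 : d' % 8 = 5)
    (hprim : Int.gcd (Int.gcd α β) γ = 1)
    (heq : d * α ^ 2 + d' * β ^ 2 = γ ^ 2) (hαeven : Even α) :
    Odd (α / 2) ∧ Odd β ∧ Odd γ :=
  stmt13_general d d' α β γ hd'8 hprim heq hαeven
end

section
/- Let π ∈ ℤ[i] be a Gaussian prime with p = N(π) ≡ 1 mod 4 a rational prime. Then the quadratic residue symbol x ↦ (x/π)₂ (defined by (x/π)₂ ≡ x^((p-1)/2) mod π) and the character x ↦ (N(x)/p) (Legendre symbol of the norm) are distinct nontrivial quadratic characters on (ℤ[i]/pℤ[i])^×. -/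
/-!
Take an integer `n` that is a quadratic non-residue mod `p`. By Euler's criterion
`p ∣ n ^ ((p - 1) / 2) + 1`, and `π ∣ p` since `N(π) = p`; so `(n/π)₂ = -1`. On the other hand
`N(n) = n²` is a square, so `(N(n)/p) = 1`: the two characters differ at `n`. Every residue mod
`p` is a sum of two squares, hence the norm of some Gaussian integer, which makes
`x ↦ (N(x)/p)` nontrivial as well.
-/

namespace Zsqrtd

variable {d : ℤ}

theorem dvd_intCast_of_norm_dvd {z : ℤ√d} {m : ℤ} (h : z.norm ∣ m) : z ∣ (m : ℤ√d) :=
  (dvd_mul_right z (star z)).trans <| norm_eq_mul_conj z ▸ Int.cast_dvd_cast _ _ h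

theorem isCoprime_intCast_of_isCoprime_norm {z : ℤ√d} {m : ℤ} (h : IsCoprime z.norm m) :
    IsCoprime z (m : ℤ√d) := by
  have h' := h.map (Int.castRingHom (ℤ√d))
  rw [eq_intCast, eq_intCast, norm_eq_mul_conj] at h'
  exact h'.of_mul_left_left

end Zsqrtd

namespace legendreSym

variable {p : ℕ} [Fact p.Prime]

theorem exists_eq_neg_one (hp : p ≠ 2) : ∃ n : ℤ, legendreSym p n = -1 := by
  obtain ⟨a, ha⟩ := quadraticChar_exists_neg_one (F := ZMod p) (by rwa [ZMod.ringChar_zmod_n])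
  exact ⟨a.cast, by rw [legendreSym, ZMod.intCast_cast, ZMod.cast_id', id]; exact ha⟩

theorem isCoprime_of_ne_zero {a : ℤ} (h : legendreSym p a ≠ 0) : IsCoprime a p := by
  rw [Ne, eq_zero_iff, ZMod.intCast_zmod_eq_zero_iff_dvd,
    ← (Nat.prime_iff_prime_int.mp Fact.out).coprime_iff_not_dvd] at h
  exact h.symm

theorem congr_of_modEq {a b : ℤ} (h : a ≡ b [ZMOD p]) : legendreSym p a = legendreSym p b := by
  rw [legendreSym.mod, h, ← legendreSym.mod]

theorem dvd_pow_add_one_of_eq_neg_one (hp : p ≠ 2) {n : ℤ} (hn : legendreSym p n = -1) :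
    (p : ℤ) ∣ n ^ ((p - 1) / 2) + 1 := by
  have hhalf : (p - 1) / 2 = p / 2 := by
    obtain ⟨k, rfl⟩ := (Fact.out : p.Prime).odd_of_ne_two hp
    omega
  rw [← ZMod.intCast_zmod_eq_zero_iff_dvd, hhalf]
  push_cast
  rw [← eq_pow, hn]
  norm_num

end legendreSym

theorem GaussianInt.exists_norm_modEq (p : ℕ) [Fact p.Prime] (n : ℤ) :
    ∃ x : GaussianInt, x.norm ≡ n [ZMOD p] := by
  obtain ⟨a, b, -, -, hab⟩ := Nat.sq_add_sq_zmodEq p n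
  exact ⟨⟨a, b⟩, by rw [Zsqrtd.norm_def]; convert hab using 1; ring⟩

theorem stmt17_general (p : ℕ) [hp : Fact p.Prime] (hp4 : p % 4 = 1)
    (π : GaussianInt) (hnorm : π.norm = (p : ℤ)) :
    (∃ x : GaussianInt, IsCoprime x (p : GaussianInt) ∧
      π ∣ (x ^ ((p - 1) / 2) + 1)) ∧
    (∃ x : GaussianInt, IsCoprime x (p : GaussianInt) ∧
      legendreSym p x.norm = -1) ∧
    (∃ x : GaussianInt, IsCoprime x (p : GaussianInt) ∧
      ((π ∣ (x ^ ((p - 1) / 2) - 1) ∧ legendreSym p x.norm = -1) ∨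
       (π ∣ (x ^ ((p - 1) / 2) + 1) ∧ legendreSym p x.norm = 1))) := by
  have hp2 : p ≠ 2 := by omega
  have hcop {x : GaussianInt} (hx : legendreSym p x.norm ≠ 0) : IsCoprime x (p : GaussianInt) :=
    mod_cast Zsqrtd.isCoprime_intCast_of_isCoprime_norm (legendreSym.isCoprime_of_ne_zero hx)
  obtain ⟨n, hn⟩ := legendreSym.exists_eq_neg_one hp2
  have hn_sq : legendreSym p (n : GaussianInt).norm = 1 := by
    rw [Zsqrtd.norm_intCast, legendreSym.mul, hn]
    norm_num
  have hn_cop : IsCoprime (n : GaussianInt) p := hcop (by rw [hn_sq]; norm_num)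
  have hn_dvd : π ∣ (n : GaussianInt) ^ ((p - 1) / 2) + 1 :=
    mod_cast Zsqrtd.dvd_intCast_of_norm_dvd
      (hnorm ▸ legendreSym.dvd_pow_add_one_of_eq_neg_one hp2 hn)
  obtain ⟨x, hx⟩ := GaussianInt.exists_norm_modEq p n
  have hx_neg : legendreSym p x.norm = -1 := (legendreSym.congr_of_modEq hx).trans hn
  exact ⟨⟨n, hn_cop, hn_dvd⟩, ⟨x, hcop (by rw [hx_neg]; norm_num), hx_neg⟩,
    ⟨n, hn_cop, Or.inr ⟨hn_dvd, hn_sq⟩⟩⟩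

/-- the quadratic residue symbol x ↦ (x/π)₂ (characterized by
x^((p-1)/2) ≡ ±1 mod π) and x ↦ (N(x)/p) are distinct nontrivial quadratic
characters on (ℤ[i]/pℤ[i])^×, for π a Gaussian prime of norm p ≡ 1 mod 4. -/
theorem stmt17 (p : ℕ) [hp : Fact p.Prime] (hp4 : p % 4 = 1)
    (π : GaussianInt) (hπ : Prime π) (hnorm : π.norm = (p : ℤ)) :
    (∃ x : GaussianInt, IsCoprime x (p : GaussianInt) ∧
      π ∣ (x ^ ((p - 1) / 2) + 1)) ∧
    (∃ x : GaussianInt, IsCoprime x (p : GaussianInt) ∧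
      legendreSym p x.norm = -1) ∧
    (∃ x : GaussianInt, IsCoprime x (p : GaussianInt) ∧
      ((π ∣ (x ^ ((p - 1) / 2) - 1) ∧ legendreSym p x.norm = -1) ∨
       (π ∣ (x ^ ((p - 1) / 2) + 1) ∧ legendreSym p x.norm = 1))) :=
  stmt17_general p (hp := hp) hp4 π hnorm
end

section
/- Let λ, λ' ∈ ℤ[i] be coprime primary primes (λ ≡ λ' ≡ 1 mod 2+2i) with p = N(λ) and q = N(λ') distinct rational primes congruent to 1 mod 4. Then the product of rational quartic residue symbols (p/q)₄ (q/p)₄ equals the quadratic residue symbol (λ'/λ)₂ over ℤ[i]. -/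
/-!
Let `χ` be the quartic residue character modulo `λ'` on `𝔽_q`, with values in `ℤ[i]`, and let
`J = J(χ, χ)` be its Jacobi sum. Since `∑ x ^ e (1 - x) ^ e` vanishes in `𝔽_q` for
`e = (q - 1) / 4`, `λ'` divides `J`; as `J * conj J = q` and `J ≡ -1 mod 2` while `λ' ≡ 1 mod 2`,
in fact `J = ±λ'`. Now reduce `χ` modulo `λ` into a field of characteristic `p` containing the
`q`-th roots of unity and let `g` be its Gauss sum. Then `g ^ 4 = q J ^ 2`, and Frobenius gives
`χ(p) g ^ p = g`; with `p = 4k + 1` this is `χ(p) (q J ^ 2) ^ k = 1` modulo `λ`, i.e.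
`(p/q)₄ (q/p)₄ (λ'/λ)₂ = 1`.
-/

local notation "ℤ[i]" => GaussianInt

open GaussianInt MulChar Finset

namespace GaussianInt

theorem norm_sub_le_two_mul_add (u v : ℤ[i]) : (u - v).norm ≤ 2 * (u.norm + v.norm) := by
  simp only [Zsqrtd.norm_def, Zsqrtd.re_sub, Zsqrtd.im_sub]
  nlinarith [sq_nonneg (u.re + v.re), sq_nonneg (u.im + v.im)]

theorem norm_eq_one_of_pow_eq_one {u : ℤ[i]} {n : ℕ} (h : u ^ n = 1) (hn : n ≠ 0) :
    u.norm = 1 :=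
  (Zsqrtd.norm_eq_one_iff' (by norm_num) u).mpr (IsUnit.of_pow_eq_one h hn)

theorem eq_of_dvd_sub {l u v : ℤ[i]} (hl : 4 < l.norm) (hu : u.norm ≤ 1) (hv : v.norm ≤ 1)
    (h : l ∣ u - v) : u = v := by
  obtain ⟨w, hw⟩ := h
  by_contra hne
  have hw0 : w ≠ 0 := by rintro rfl; exact hne (sub_eq_zero.mp (by simpa using hw))
  have hle := norm_le_norm_mul_left l hw0
  have hsub := norm_sub_le_two_mul_add u v
  rw [hw] at hsub
  have := norm_nonneg (l * w)
  omega

theorem isPrimitiveRoot_i : IsPrimitiveRoot (⟨0, 1⟩ : ℤ[i]) 4 :=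
  IsPrimitiveRoot.of_map_of_injective (f := toComplex)
    (by simpa [toComplex_def'] using Complex.isPrimitiveRoot_I) toComplex_injective

theorem sq_eq_one_of_isUnit_of_two_dvd_add_one {m : ℤ[i]} (hm : IsUnit m)
    (h : (2 : ℤ[i]) ∣ m + 1) : m ^ 2 = 1 := by
  have hnorm : m.re * m.re + m.im * m.im = 1 := by
    simpa [Zsqrtd.norm_def] using (Zsqrtd.norm_eq_one_iff' (by norm_num) m).mpr hm
  obtain ⟨-, k, hk⟩ := (Zsqrtd.intCast_dvd 2 (m + 1)).mp (by exact_mod_cast h)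
  rw [Zsqrtd.im_add, Zsqrtd.im_one, add_zero] at hk
  have hk0 : k = 0 := by
    have : -1 < k ∧ k < 1 := ⟨by nlinarith, by nlinarith⟩
    omega
  rw [hk, hk0, mul_zero, mul_zero, add_zero] at hnorm
  ext <;> simp [sq, hk, hk0, hnorm]

theorem exists_ringHom_eq_zero_iff_dvd {l : ℤ[i]} (hl : Prime l) :
    ∃ (K : Type) (_ : Field K) (π : ℤ[i] →+* K), ∀ z, π z = 0 ↔ l ∣ z := by
  have := PrincipalIdealRing.isMaximal_of_irreducible hl.irreducible
  exact ⟨_, Ideal.Quotient.field _, Ideal.Quotient.mk _, Ideal.Quotient.eq_zero_iff_dvd l⟩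

theorem charP_of_map_eq_zero {K : Type*} [Field K] (π : ℤ[i] →+* K) {l : ℤ[i]}
    {p : ℕ} (hp : p.Prime) (hN : l.norm = p) (hπl : π l = 0) : CharP K p := by
  refine (CharP.charP_iff_prime_eq_zero hp).mpr ?_
  have : ((p : ℤ) : ℤ[i]) = l * star l := hN ▸ Zsqrtd.norm_eq_mul_conj l
  rw [← map_natCast π, ← Int.cast_natCast, this, map_mul, hπl, zero_mul]

-- `{z | z.norm ≤ 1} = {0, ±1, ±i}` contains all values of `ℤ[i]`-valued characters, and the
-- differences of its elements have norm at most `4`.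
theorem injOn_of_map_eq_zero {K : Type*} [CommRing K] (π : ℤ[i] →+* K) {l : ℤ[i]}
    (hl : 4 < l.norm) (hπ : ∀ z, π z = 0 → l ∣ z) : Set.InjOn π {z | z.norm ≤ 1} :=
  fun _ hu _ hv huv => eq_of_dvd_sub hl hu hv (hπ _ (by rw [map_sub, huv, sub_self]))

theorem exists_norm_le_one_map_eq_of_pow_four_eq_one {K : Type*} [Field K] (π : ℤ[i] →+* K)
    {v : K} (hv : v ^ 4 = 1) : ∃ u : ℤ[i], u.norm ≤ 1 ∧ π u = v := by
  have hi : π ⟨0, 1⟩ ^ 2 = -1 := by rw [← map_pow, ← map_one π, ← map_neg]; rfl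
  have hi' : π ⟨0, -1⟩ = -π ⟨0, 1⟩ := by rw [← map_neg]; rfl
  have hroots : (v - π 1) * (v - π (-1)) * (v - π ⟨0, 1⟩) * (v - π ⟨0, -1⟩) = 0 := by
    rw [hi', map_neg, map_one]
    linear_combination hv - v ^ 2 * hi + hi
  simp only [mul_eq_zero, sub_eq_zero] at hroots
  rcases hroots with ((h | h) | h) | h
  · exact ⟨1, by decide, h.symm⟩
  · exact ⟨-1, by decide, h.symm⟩
  · exact ⟨⟨0, 1⟩, by decide, h.symm⟩
  · exact ⟨⟨0, -1⟩, by decide, h.symm⟩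

end GaussianInt

namespace MulChar

theorem norm_apply_le_one {R : Type*} [CommMonoid R] (χ : MulChar R ℤ[i]) (a : R) :
    (χ a).norm ≤ 1 := by
  by_cases ha : IsUnit a
  · exact ((Zsqrtd.norm_eq_one_iff' (by norm_num) _).mpr (ha.map χ)).le
  · simp [χ.map_nonunit ha]

theorem inv_eq_ringHomComp_star {R : Type*} [CommMonoidWithZero R] (χ : MulChar R ℤ[i]) :
    χ⁻¹ = χ.ringHomComp (starRingEnd ℤ[i]) := by
  refine MulChar.ext fun a => ?_
  have hu := a.isUnit.map χ
  have hstar : χ a * star (χ a) = 1 := by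
    rw [← Zsqrtd.norm_eq_mul_conj, (Zsqrtd.norm_eq_one_iff' (by norm_num) _).mpr hu, Int.cast_one]
  rw [inv_apply_eq_inv, ringHomComp_apply, starRingEnd_apply,
    ← Ring.inverse_mul_cancel_left _ (star (χ a)) hu, hstar, mul_one]

theorem ringHomComp_ne_one_of_injOn {R K : Type*} [CommMonoid R] [CommRing K]
    {π : ℤ[i] →+* K} (hπ : Set.InjOn π {z | z.norm ≤ 1}) {χ : MulChar R ℤ[i]} (hχ : χ ≠ 1) :
    χ.ringHomComp π ≠ 1 := by
  obtain ⟨a, ha⟩ := ne_one_iff.mp hχ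
  refine ne_one_iff.mpr ⟨a, fun h => ha (hπ (norm_apply_le_one χ a) (by decide) ?_)⟩
  rwa [map_one, ← ringHomComp_apply]

end MulChar

theorem FiniteField.sum_pow_mul_one_sub_pow_eq_zero {F : Type*} [Field F] [Fintype F] {a b : ℕ}
    (h : a + b < Fintype.card F - 1) : ∑ x : F, x ^ a * (1 - x) ^ b = 0 := by
  have hexpand : ∀ x : F, x ^ a * (1 - x) ^ b =
      ∑ k ∈ range (b + 1), (-1) ^ k * (b.choose k : F) * x ^ (a + k) := by
    intro x
    rw [sub_eq_neg_add, add_pow, mul_sum]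
    refine sum_congr rfl fun k _ => ?_
    rw [neg_pow, one_pow, mul_one, pow_add]
    ring
  simp_rw [hexpand]
  rw [sum_comm]
  refine sum_eq_zero fun k hk => ?_
  rw [← mul_sum, FiniteField.sum_pow_lt_card_sub_one _ _ (by rw [mem_range] at hk; omega), mul_zero]

section QuarticCharacter

variable {F K : Type*} [Field F] [Fintype F] [Field K] {π : ℤ[i] →+* K}

-- `χ a` is the element of `{0, ±1, ±i}` lifting `ι a ^ e`; injectivity of `π` there makes `χ`
-- multiplicative.
theorem exists_mulChar_map_eq_pow (ι : F →+* K) (hπ : Set.InjOn π {z | z.norm ≤ 1})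
    (h4 : 4 ∣ Fintype.card F - 1) :
    ∃ χ : MulChar F ℤ[i], ∀ a, π (χ a) = ι a ^ ((Fintype.card F - 1) / 4) := by
  set e := (Fintype.card F - 1) / 4
  have he : e ≠ 0 := by have := Fintype.one_lt_card (α := F); omega
  have hval : ∀ a : F, ∃ u : ℤ[i], u.norm ≤ 1 ∧ π u = ι a ^ e := by
    intro a
    rcases eq_or_ne a 0 with rfl | ha
    · exact ⟨0, by decide, by rw [map_zero, map_zero, zero_pow he]⟩
    refine exists_norm_le_one_map_eq_of_pow_four_eq_one π ?_
    rw [← pow_mul, Nat.div_mul_cancel h4, ← map_pow, FiniteField.pow_card_sub_one_eq_one a ha,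
      map_one]
  choose f hfD hf using hval
  have hmulD : ∀ a b, (f a * f b).norm ≤ 1 := fun a b => by
    rw [Zsqrtd.norm_mul]; exact mul_le_one₀ (hfD a) (norm_nonneg _) (hfD b)
  refine ⟨{ toFun := f, map_one' := ?_, map_mul' := ?_, map_nonunit' := ?_ }, hf⟩
  · exact hπ (hfD 1) (by decide) (by rw [hf, map_one, one_pow, map_one])
  · exact fun a b => hπ (hfD _) (hmulD a b) (by rw [hf, map_mul, map_mul, hf, hf, mul_pow])
  · intro a ha
    obtain rfl : a = 0 := by simpa [isUnit_iff_ne_zero] using ha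
    exact hπ (hfD 0) (by decide) (by rw [hf, map_zero, map_zero, zero_pow he])

theorem pow_four_eq_one_of_map_eq_pow {ι : F →+* K} (hπ : Set.InjOn π {z | z.norm ≤ 1})
    (h4 : 4 ∣ Fintype.card F - 1) {χ : MulChar F ℤ[i]}
    (hχ : ∀ a, π (χ a) = ι a ^ ((Fintype.card F - 1) / 4)) : χ ^ 4 = 1 := by
  refine MulChar.ext fun a => ?_
  refine hπ (norm_apply_le_one _ _) (norm_apply_le_one _ _) ?_
  rw [pow_apply_coe, one_apply_coe, map_pow, hχ, ← pow_mul, Nat.div_mul_cancel h4, ← map_pow,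
    FiniteField.pow_card_sub_one_eq_one _ a.ne_zero, map_one, map_one]

theorem pow_two_ne_one_of_map_eq_pow {ι : F →+* K} (h4 : 4 ∣ Fintype.card F - 1)
    {χ : MulChar F ℤ[i]}
    (hχ : ∀ a, π (χ a) = ι a ^ ((Fintype.card F - 1) / 4)) : χ ^ 2 ≠ 1 := by
  have hodd : Fintype.card F % 2 = 1 := by have := Fintype.one_lt_card (α := F); omega
  have hF : ringChar F ≠ 2 := fun h => by
    rw [FiniteField.even_card_iff_char_two.mp h] at hodd
    exact zero_ne_one hodd
  obtain ⟨a, ha⟩ := FiniteField.exists_nonsquare hF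
  have ha0 : a ≠ 0 := by rintro rfl; exact ha ⟨0, by simp⟩
  intro h
  refine ha ((FiniteField.isSquare_iff hF ha0).mpr (ι.injective ?_))
  have h1 : χ a ^ 2 = 1 := by rw [← pow_apply' χ two_ne_zero, h, one_apply ha0.isUnit]
  have h2 : Fintype.card F / 2 = (Fintype.card F - 1) / 4 * 2 := by omega
  rw [map_one, map_pow, h2, pow_mul, ← hχ, ← map_pow, h1, map_one]

end QuarticCharacter

section JacobiSum

variable {F : Type*} [Field F] [Fintype F]

theorem jacobiSum_mul_star_self {χ : MulChar F ℤ[i]} (hχ : χ ≠ 1) (hχ2 : χ ^ 2 ≠ 1) :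
    jacobiSum χ χ * star (jacobiSum χ χ) = Fintype.card F := by
  have hchar : ringChar ℂ ≠ ringChar F := by
    rw [ringChar.eq_zero]; exact (CharP.char_is_prime F _).ne_zero.symm
  have hne : χ.ringHomComp toComplex ≠ 1 := (ringHomComp_ne_one_iff toComplex_injective).mpr hχ
  have hne2 : χ.ringHomComp toComplex * χ.ringHomComp toComplex ≠ 1 := by
    rw [← ringHomComp_mul, ← sq]; exact (ringHomComp_ne_one_iff toComplex_injective).mpr hχ2
  have h := jacobiSum_mul_jacobiSum_inv hchar hne hne hne2
  rw [ringHomComp_inv, inv_eq_ringHomComp_star, jacobiSum_ringHomComp, jacobiSum_ringHomComp,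
    jacobiSum_ringHomComp, ← map_mul, starRingEnd_apply] at h
  exact toComplex_injective (h.trans (map_natCast _ _).symm)

theorem two_dvd_jacobiSum_add_one {χ : MulChar F ℤ[i]} (hχ : χ ^ 4 = 1)
    (h4 : 4 ∣ Fintype.card F - 1) : (2 : ℤ[i]) ∣ jacobiSum χ χ + 1 := by
  -- `J = -1 + z (i - 1) ^ 2` and `(i - 1) ^ 2 = -2i`
  obtain ⟨z, -, hz⟩ := exists_jacobiSum_eq_neg_one_add (by norm_num) hχ hχ h4 isPrimitiveRoot_i
  refine ⟨-(z * ⟨0, 1⟩), ?_⟩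
  rw [hz]
  ext <;> simp [sq] <;> ring

theorem jacobiSum_sq_eq_sq_of_map_eq_pow {K : Type*} [Field K]
    {ι : F →+* K} {π : ℤ[i] →+* K} {l : ℤ[i]} (hl : (⟨2, 2⟩ : ℤ[i]) ∣ l - 1)
    (hN : l.norm = Fintype.card F) (hπ : ∀ z, π z = 0 ↔ l ∣ z) (h4 : 4 ∣ Fintype.card F - 1)
    {χ : MulChar F ℤ[i]} (hχ : ∀ a, π (χ a) = ι a ^ ((Fintype.card F - 1) / 4)) :
    jacobiSum χ χ ^ 2 = l ^ 2 := by
  set e := (Fintype.card F - 1) / 4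
  have hcard : 5 ≤ Fintype.card F := by have := Fintype.one_lt_card (α := F); omega
  have hinj := injOn_of_map_eq_zero π (by rw [hN]; exact_mod_cast hcard) fun z => (hπ z).mp
  have hχ4 := pow_four_eq_one_of_map_eq_pow hinj h4 hχ
  have hχ2 := pow_two_ne_one_of_map_eq_pow h4 hχ
  have hdvd : l ∣ jacobiSum χ χ := by
    rw [← hπ]
    have : π (jacobiSum χ χ) = ι (∑ x, x ^ e * (1 - x) ^ e) := by
      simp only [jacobiSum, map_sum, map_mul, hχ, map_pow, map_sub, map_one]
    rw [this, FiniteField.sum_pow_mul_one_sub_pow_eq_zero (by omega), map_zero]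
  obtain ⟨m, hm⟩ := hdvd
  have hll : l * star l = Fintype.card F := by
    rw [← Zsqrtd.norm_eq_mul_conj, hN, Int.cast_natCast]
  have hm1 : m * star m = 1 := by
    have h := jacobiSum_mul_star_self (fun h => hχ2 (by rw [h, one_pow])) hχ2
    rw [hm, star_mul, ← hll] at h
    refine mul_left_cancel₀ (a := l * star l) ?_ ?_
    · rw [hll]; exact_mod_cast (by omega : Fintype.card F ≠ 0)
    · linear_combination h
  have h2 : (2 : ℤ[i]) ∣ m + 1 := by
    have h2l : (2 : ℤ[i]) ∣ l - 1 := dvd_trans ⟨⟨1, 1⟩, by decide⟩ hl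
    have h2J := two_dvd_jacobiSum_add_one hχ4 h4
    rw [hm] at h2J
    have : m + 1 = (l * m + 1) - (l - 1) * m := by ring
    rw [this]
    exact dvd_sub h2J (dvd_mul_of_dvd_left h2l m)
  rw [hm, mul_pow, sq_eq_one_of_isUnit_of_two_dvd_add_one (IsUnit.of_mul_eq_one _ hm1) h2,
    mul_one]

end JacobiSum

section GaussSum

variable {F : Type*} [Field F] [Fintype F]

theorem gaussSum_pow_four {L : Type*} [Field L] {χ : MulChar F L} (hχ4 : χ ^ 4 = 1)
    (hχ2 : χ ^ 2 ≠ 1) {ψ : AddChar F L} (hψ : ψ.IsPrimitive) :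
    gaussSum χ ψ ^ 4 = Fintype.card F * jacobiSum χ χ ^ 2 := by
  have hquad : IsQuadratic (χ ^ 2) := isQuadratic_iff_sq_eq_one.mpr (by rw [← pow_mul, hχ4])
  have hneg : (χ ^ 2) (-1) = 1 := by rw [pow_apply' χ two_ne_zero, ← map_pow, neg_one_sq, map_one]
  have hsq := gaussSum_sq hχ2 hquad hψ
  have hJ := jacobiSum_mul_nontrivial (by rwa [← sq]) ψ
  rw [hneg, one_mul] at hsq
  rw [← sq] at hJ
  calc gaussSum χ ψ ^ 4 = (gaussSum χ ψ * gaussSum χ ψ) ^ 2 := by ring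
    _ = Fintype.card F * jacobiSum χ χ ^ 2 := by rw [← hJ, mul_pow, hsq]

theorem mul_gaussSum_pow_char {L : Type*} [CommRing L] (p : ℕ) [Fact p.Prime] [CharP L p]
    (hp : IsUnit (p : F)) {χ : MulChar F L} (hχp : χ ^ p = χ) (ψ : AddChar F L) :
    χ p * gaussSum χ ψ ^ p = gaussSum χ ψ := by
  rw [gaussSum_frob, hχp, AddChar.pow_mulShift, ← hp.unit_spec, gaussSum_mulShift]

theorem mul_card_mul_jacobiSum_sq_pow_eq_one {K : Type*} [Field K] (p : ℕ) [Fact p.Prime]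
    [CharP K p] (hchar : ringChar K ≠ ringChar F) (hp4 : p % 4 = 1) {χ : MulChar F K}
    (hχ4 : χ ^ 4 = 1) (hχ2 : χ ^ 2 ≠ 1) :
    χ p * (Fintype.card F * jacobiSum χ χ ^ 2) ^ ((p - 1) / 4) = 1 := by
  -- a primitive additive character exists over a cyclotomic extension of `K`
  let ψ := AddChar.FiniteField.primitiveChar F K hchar
  let f := algebraMap K (CyclotomicField ψ.n K)
  have : CharP (CyclotomicField ψ.n K) p := charP_of_injective_algebraMap f.injective p
  set χ' := χ.ringHomComp f
  have hχ'4 : χ' ^ 4 = 1 := by rw [ringHomComp_pow, hχ4, ringHomComp_one]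
  have hχ'2 : χ' ^ 2 ≠ 1 := by
    rw [ringHomComp_pow]; exact (ringHomComp_ne_one_iff f.injective).mpr hχ2
  have hχ'p : χ' ^ p = χ' := by
    rw [← Nat.div_add_mod p 4, hp4, pow_succ, pow_mul, hχ'4, one_pow, one_mul]
  obtain ⟨n, hr, hcard⟩ := FiniteField.card F (ringChar F)
  have hr' : Fact (ringChar F).Prime := ⟨hr⟩
  have hcardL : (Fintype.card F : CyclotomicField ψ.n K) ≠ 0 := by
    rw [hcard, Nat.cast_pow]
    refine pow_ne_zero _ fun h => hchar ?_
    exact (Algebra.ringChar_eq K _).trans (CharP.ringChar_of_prime_eq_zero hr h)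
  have hpF : IsUnit (p : F) := by
    rw [isUnit_iff_not_dvd_char, Nat.prime_dvd_prime_iff_eq Fact.out hr, ← ringChar.eq K p]
    exact hchar
  have hg := gaussSum_ne_zero_of_nontrivial (χ := χ') hcardL
    (fun h => hχ'2 (by rw [h, one_pow])) ψ.prim
  have hfrob := mul_gaussSum_pow_char p hpF hχ'p ψ.char
  apply f.injective
  rw [map_mul, map_pow, map_mul, map_natCast f, map_pow, ← jacobiSum_ringHomComp,
    ← ringHomComp_apply, map_one, ← gaussSum_pow_four hχ'4 hχ'2 ψ.prim]
  refine mul_right_cancel₀ hg ?_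
  have hp : p = 4 * ((p - 1) / 4) + 1 := by omega
  rw [one_mul, mul_assoc, ← pow_mul, ← pow_succ, ← hp, hfrob]

theorem map_mul_card_mul_jacobiSum_sq_pow_eq_one {K : Type*} [Field K] (p : ℕ) [Fact p.Prime]
    [CharP K p] (hchar : ringChar K ≠ ringChar F) (hp4 : p % 4 = 1) {π : ℤ[i] →+* K}
    (hπ : Set.InjOn π {z | z.norm ≤ 1}) {χ : MulChar F ℤ[i]} (hχ4 : χ ^ 4 = 1) (hχ2 : χ ^ 2 ≠ 1) :
    π (χ p * (Fintype.card F * jacobiSum χ χ ^ 2) ^ ((p - 1) / 4)) = 1 := by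
  have h := mul_card_mul_jacobiSum_sq_pow_eq_one p hchar hp4 (χ := χ.ringHomComp π)
    (by rw [ringHomComp_pow, hχ4, ringHomComp_one])
    (by rw [ringHomComp_pow]; exact ringHomComp_ne_one_of_injOn hπ hχ2)
  rwa [ringHomComp_apply, jacobiSum_ringHomComp, ← map_natCast π, ← map_pow, ← map_mul, ← map_pow,
    ← map_mul] at h

end GaussSum

theorem exists_quarticResidueChar {l : ℤ[i]} (hl : Prime l) (hprimary : (⟨2, 2⟩ : ℤ[i]) ∣ l - 1)
    {q : ℕ} [Fact q.Prime] (hq4 : q % 4 = 1) (hN : l.norm = q) :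
    ∃ χ : MulChar (ZMod q) ℤ[i], χ ^ 4 = 1 ∧ χ ^ 2 ≠ 1 ∧ jacobiSum χ χ ^ 2 = l ^ 2 ∧
      ∀ n : ℕ, l ∣ χ n - n ^ ((q - 1) / 4) := by
  have hq : q.Prime := Fact.out
  obtain ⟨K, _, π, hπ⟩ := exists_ringHom_eq_zero_iff_dvd hl
  have : CharP K q := charP_of_map_eq_zero π hq hN ((hπ l).mpr dvd_rfl)
  have hinj := injOn_of_map_eq_zero π (by have := hq.two_le; omega) fun z => (hπ z).mp
  have h4 : 4 ∣ Fintype.card (ZMod q) - 1 := by rw [ZMod.card]; omega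
  obtain ⟨χ, hχ⟩ := exists_mulChar_map_eq_pow (ZMod.castHom dvd_rfl K) hinj h4
  refine ⟨χ, pow_four_eq_one_of_map_eq_pow hinj h4 hχ, pow_two_ne_one_of_map_eq_pow h4 hχ,
    jacobiSum_sq_eq_sq_of_map_eq_pow hprimary (by rw [ZMod.card, hN]) hπ h4 hχ, fun n => ?_⟩
  rw [← hπ, map_sub, hχ, ZMod.card, map_natCast, map_pow, map_natCast, sub_self]

theorem stmt18_general (l l' : GaussianInt) (hl : Prime l) (hl' : Prime l')
    (hl'primary : ((⟨2, 2⟩ : GaussianInt)) ∣ (l' - 1))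
    (p q : ℕ) (hp : p.Prime) (hq : q.Prime)
    (hp4 : p % 4 = 1) (hq4 : q % 4 = 1) (hpq : p ≠ q)
    (hNp : l.norm = (p : ℤ)) (hNq : l'.norm = (q : ℤ))
    (εp εq εl : GaussianInt) (hεp : εp ^ 4 = 1) (hεq : εq ^ 4 = 1) (hεl : εl ^ 2 = 1)
    (h1 : l ∣ ((q : GaussianInt) ^ ((p - 1) / 4) - εp))
    (h2 : l' ∣ ((p : GaussianInt) ^ ((q - 1) / 4) - εq))
    (h3 : l ∣ (l' ^ ((p - 1) / 2) - εl)) :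
    εp * εq = εl := by
  have := Fact.mk hp
  have := Fact.mk hq
  have hp2 := hp.two_le
  have hq2 := hq.two_le
  obtain ⟨χ, hχ4, hχ2, hJ, hχl'⟩ := exists_quarticResidueChar hl' hl'primary hq4 hNq
  obtain ⟨K, _, π, hπ⟩ := exists_ringHom_eq_zero_iff_dvd hl
  have : CharP K p := charP_of_map_eq_zero π hp hNp ((hπ l).mpr dvd_rfl)
  have hinj := injOn_of_map_eq_zero π (by omega) fun z => (hπ z).mp
  have hmod : ∀ {a b : ℤ[i]}, l ∣ a - b → π a = π b := fun h =>
    sub_eq_zero.mp (by rw [← map_sub]; exact (hπ _).mpr h)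
  have key := map_mul_card_mul_jacobiSum_sq_pow_eq_one p
    (by rwa [ringChar.eq K p, ZMod.ringChar_zmod_n]) hp4 hinj hχ4 hχ2
  rw [hJ, ZMod.card, mul_pow, ← pow_mul, show 2 * ((p - 1) / 4) = (p - 1) / 2 by omega] at key
  have hχp : χ p = εq := eq_of_dvd_sub (l := l') (by omega) (norm_apply_le_one χ _)
    (norm_eq_one_of_pow_eq_one hεq four_ne_zero).le (by simpa using dvd_add (hχl' p) h2)
  have hprod : εq * (εp * εl) = 1 := by
    refine hinj ?_ (by decide) ?_
    · simp only [Set.mem_ofPred_eq, Zsqrtd.norm_mul, norm_eq_one_of_pow_eq_one hεq four_ne_zero,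
        norm_eq_one_of_pow_eq_one hεp four_ne_zero, norm_eq_one_of_pow_eq_one hεl two_ne_zero]
      norm_num
    rw [map_one, ← key, map_mul, map_mul, map_mul, map_mul, hχp, hmod h1, hmod h3]
  linear_combination εl * hprod - εp * εq * hεl

/-- for coprime primary Gaussian primes λ, λ' of norms
p ≠ q, both ≡ 1 mod 4, the product of the rational quartic residue symbols
(p/q)₄ (q/p)₄ equals the quadratic residue symbol (λ'/λ)₂. The symbols are
characterized by the congruences q^((p-1)/4) ≡ εp mod λ, p^((q-1)/4) ≡ εq
mod λ', λ'^((p-1)/2) ≡ εl mod λ, with εp, εq fourth roots of unity and εl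
a square root of unity. -/
theorem stmt18 (l l' : GaussianInt) (hl : Prime l) (hl' : Prime l')
    (hlprimary : ((⟨2, 2⟩ : GaussianInt)) ∣ (l - 1))
    (hl'primary : ((⟨2, 2⟩ : GaussianInt)) ∣ (l' - 1))
    (p q : ℕ) (hp : p.Prime) (hq : q.Prime)
    (hp4 : p % 4 = 1) (hq4 : q % 4 = 1) (hpq : p ≠ q)
    (hNp : l.norm = (p : ℤ)) (hNq : l'.norm = (q : ℤ))
    (hcop : IsCoprime l l')
    (εp εq εl : GaussianInt) (hεp : εp ^ 4 = 1) (hεq : εq ^ 4 = 1) (hεl : εl ^ 2 = 1)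
    (h1 : l ∣ ((q : GaussianInt) ^ ((p - 1) / 4) - εp))
    (h2 : l' ∣ ((p : GaussianInt) ^ ((q - 1) / 4) - εq))
    (h3 : l ∣ (l' ^ ((p - 1) / 2) - εl)) :
    εp * εq = εl :=
  stmt18_general l l' hl hl' hl'primary p q hp hq hp4 hq4 hpq hNp hNq εp εq εl hεp hεq hεl h1 h2 h3
end
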